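/- arXiv:2405.11291 — 4 statements merged into one kernel-verified Lean document; each statement's English description precedes it below -/
import Mathlib

section
/- For every r > 0 one has the identity (in [0,∞]) τ̄(r) = r^{-α/d} ∫_{(0, r t^{d/α}]} z^{α/d} λ(dz) + t·λ̄(r t^{d/α}). Consequently, τ̄(r) < ∞ for every r > 0 if and only if ∫_{(0,1]} z^{α/d} λ(dz) < ∞. -/
open MeasureTheory Set Filter Topology
open scoped ENNReal NNReal

/-- `tauBar d α t lam r = τ̄(r)`, where
`τ(B) = (Leb ⊗ λ)({(s,z) ∈ (0,t] × (0,∞) : z·s^{-d/α} ∈ B})` and `τ̄(r) = τ((r,∞))`. -/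
noncomputable def tauBar (d : ℕ) (α t : ℝ) (lam : MeasureTheory.Measure ℝ) (r : ℝ) : ℝ≥0∞ :=
  ((MeasureTheory.volume.restrict (Set.Ioc (0:ℝ) t)).prod (lam.restrict (Set.Ioi (0:ℝ))))
    {p : ℝ × ℝ | r < p.2 * p.1 ^ (-((d : ℝ) / α))}

/-!
Integrate first in `s`: for fixed `z > 0` the section `{s ∈ (0,t] : z s^{-d/α} > r}` is the
interval `(0, min t ((z/r)^{α/d}))`, so `τ̄(r) = ∫ min t ((z/r)^{α/d}) λ(dz)`, and splitting the
integral at `z = r t^{d/α}` gives the formula. The integrability hypothesis on `λ` makes every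
tail `λ((c,∞))`, `c > 0`, finite (so `λ` is σ-finite on `(0,∞)` and Tonelli applies), hence
`τ̄(r) < ∞` iff `∫_{(0, r t^{d/α}]} z^{α/d} dλ < ∞`; since `z^{α/d}` is bounded on `(1, R]`,
this is finiteness of the integral over `(0,1]`.
-/

theorem measure_Ioi_lt_top_of_lintegral_min_one_sq_ne_top {μ : Measure ℝ}
    (h : ∫⁻ z in Ioi (0:ℝ), ENNReal.ofReal (min 1 (z ^ 2)) ∂μ ≠ ⊤) {c : ℝ} (hc : 0 < c) :
    μ (Ioi c) < ⊤ := by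
  have hpos : ENNReal.ofReal (min 1 (c ^ 2)) ≠ 0 :=
    (ENNReal.ofReal_pos.2 (lt_min one_pos (pow_pos hc 2))).ne'
  refine ENNReal.lt_top_of_mul_ne_top_right (ne_top_of_le_ne_top h ?_) hpos
  calc ENNReal.ofReal (min 1 (c ^ 2)) * μ (Ioi c)
      = ∫⁻ _ in Ioi c, ENNReal.ofReal (min 1 (c ^ 2)) ∂μ := (setLIntegral_const _ _).symm
    _ ≤ ∫⁻ z in Ioi c, ENNReal.ofReal (min 1 (z ^ 2)) ∂μ :=
      setLIntegral_mono' measurableSet_Ioi fun z hz => by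
        gcongr
        exact le_of_lt hz
    _ ≤ ∫⁻ z in Ioi (0:ℝ), ENNReal.ofReal (min 1 (z ^ 2)) ∂μ :=
      lintegral_mono_set (Ioi_subset_Ioi hc.le)

theorem sigmaFinite_restrict_Ioi_zero {μ : Measure ℝ} (h : ∀ c : ℝ, 0 < c → μ (Ioi c) < ⊤) :
    SigmaFinite (μ.restrict (Ioi 0)) := by
  refine ⟨⟨⟨fun n => Iic 0 ∪ Ioi (1 / ((n : ℝ) + 1)), fun _ => trivial, fun n => ?_, ?_⟩⟩⟩
  · have hn : (0:ℝ) < 1 / ((n : ℝ) + 1) := Nat.one_div_pos_of_nat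
    rw [Measure.restrict_apply' measurableSet_Ioi, union_inter_distrib_right,
      (Iic_disjoint_Ioi le_rfl).inter_eq, empty_union, inter_eq_left.2 (Ioi_subset_Ioi hn.le)]
    exact h _ hn
  · refine eq_univ_of_forall fun x => ?_
    rcases le_or_gt x 0 with hx | hx
    · exact mem_iUnion.2 ⟨0, Or.inl hx⟩
    · obtain ⟨n, hn⟩ := exists_nat_one_div_lt hx
      exact mem_iUnion.2 ⟨n, Or.inr hn⟩

theorem volume_Ioc_inter_Iio (t y : ℝ) :
    volume (Ioc 0 t ∩ Iio y) = ENNReal.ofReal (min t y) := by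
  refine le_antisymm ?_ ?_
  · calc volume (Ioc 0 t ∩ Iio y) ≤ volume (Ioc 0 (min t y)) :=
          measure_mono fun s hs => ⟨hs.1.1, le_min hs.1.2 hs.2.le⟩
      _ = ENNReal.ofReal (min t y) := by rw [Real.volume_Ioc, sub_zero]
  · calc ENNReal.ofReal (min t y) = volume (Ioo 0 (min t y)) := by rw [Real.volume_Ioo, sub_zero]
      _ ≤ volume (Ioc 0 t ∩ Iio y) := measure_mono fun s hs =>
          ⟨⟨hs.1, hs.2.le.trans (min_le_left _ _)⟩, hs.2.trans_le (min_le_right _ _)⟩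

theorem lt_mul_rpow_neg_iff {p r s z : ℝ} (hp : 0 < p) (hr : 0 < r) (hs : 0 < s) (hz : 0 ≤ z) :
    r < z * s ^ (-p) ↔ s < (z / r) ^ p⁻¹ := by
  rw [Real.rpow_neg hs.le, ← div_eq_mul_inv, lt_div_iff₀ (Real.rpow_pos_of_pos hs p),
    Real.lt_rpow_inv_iff_of_pos hs.le (div_nonneg hz hr.le) hp, lt_div_iff₀ hr, mul_comm]

theorem volume_restrict_Ioc_setOf_lt_mul_rpow_neg {p r z : ℝ} (t : ℝ) (hp : 0 < p) (hr : 0 < r)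
    (hz : 0 ≤ z) :
    volume.restrict (Ioc 0 t) {s : ℝ | r < z * s ^ (-p)} = ENNReal.ofReal (min t ((z / r) ^ p⁻¹)) := by
  have hset : {s : ℝ | r < z * s ^ (-p)} ∩ Ioc 0 t = Ioc 0 t ∩ Iio ((z / r) ^ p⁻¹) := by
    ext s
    simp only [mem_inter_iff, mem_ofPred_eq, mem_Ioc, mem_Iio]
    constructor
    · rintro ⟨hlt, hs⟩
      exact ⟨hs, (lt_mul_rpow_neg_iff hp hr hs.1 hz).1 hlt⟩
    · rintro ⟨hs, hlt⟩
      exact ⟨(lt_mul_rpow_neg_iff hp hr hs.1 hz).2 hlt, hs⟩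
  rw [Measure.restrict_apply (measurableSet_lt measurable_const (by fun_prop)), hset,
    volume_Ioc_inter_Iio]

theorem rpow_inv_div_le_iff {p r t z : ℝ} (hp : 0 < p) (hr : 0 < r) (ht : 0 ≤ t) (hz : 0 ≤ z) :
    (z / r) ^ p⁻¹ ≤ t ↔ z ≤ r * t ^ p := by
  rw [Real.rpow_inv_le_iff_of_pos (div_nonneg hz hr.le) ht hp, div_le_iff₀' hr]

theorem prod_setOf_lt_mul_rpow_neg (lam : Measure ℝ) [SFinite (lam.restrict (Ioi 0))]
    {p r t : ℝ} (hp : 0 < p) (hr : 0 < r) (ht : 0 ≤ t) :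
    ((volume.restrict (Ioc (0:ℝ) t)).prod (lam.restrict (Ioi (0:ℝ))))
        {q : ℝ × ℝ | r < q.2 * q.1 ^ (-p)}
      = ENNReal.ofReal (r ^ (-p⁻¹)) * ∫⁻ z in Ioc 0 (r * t ^ p), ENNReal.ofReal (z ^ p⁻¹) ∂lam
        + ENNReal.ofReal t * lam (Ioi (r * t ^ p)) := by
  set R := r * t ^ p
  have hR : 0 ≤ R := mul_nonneg hr.le (Real.rpow_nonneg ht p)
  have hsmall : ∀ z ∈ Ioc 0 R, ENNReal.ofReal (min t ((z / r) ^ p⁻¹))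
      = ENNReal.ofReal (r ^ (-p⁻¹)) * ENNReal.ofReal (z ^ p⁻¹) := fun z hz => by
    rw [min_eq_right ((rpow_inv_div_le_iff hp hr ht hz.1.le).2 hz.2),
      Real.div_rpow hz.1.le hr.le, div_eq_mul_inv, ← Real.rpow_neg hr.le, mul_comm,
      ENNReal.ofReal_mul (Real.rpow_nonneg hr.le _)]
  have hlarge : ∀ z ∈ Ioi R, ENNReal.ofReal (min t ((z / r) ^ p⁻¹)) = ENNReal.ofReal t :=
    fun z hz => by
      rw [min_eq_left (not_le.1 <| mt (rpow_inv_div_le_iff hp hr ht (hR.trans hz.le)).1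
        (not_le.2 hz)).le]
  rw [Measure.prod_apply_symm (measurableSet_lt measurable_const (by fun_prop))]
  calc ∫⁻ z in Ioi 0, volume.restrict (Ioc 0 t) {s : ℝ | r < z * s ^ (-p)} ∂lam
      = ∫⁻ z in Ioi 0, ENNReal.ofReal (min t ((z / r) ^ p⁻¹)) ∂lam :=
        setLIntegral_congr_fun measurableSet_Ioi fun z hz =>
          volume_restrict_Ioc_setOf_lt_mul_rpow_neg t hp hr (le_of_lt hz)
    _ = (∫⁻ z in Ioc 0 R, ENNReal.ofReal (min t ((z / r) ^ p⁻¹)) ∂lam)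
          + ∫⁻ z in Ioi R, ENNReal.ofReal (min t ((z / r) ^ p⁻¹)) ∂lam := by
        rw [← lintegral_union measurableSet_Ioi Ioc_disjoint_Ioi_same, Ioc_union_Ioi_eq_Ioi hR]
    _ = _ := by
        rw [setLIntegral_congr_fun measurableSet_Ioc hsmall,
          setLIntegral_congr_fun measurableSet_Ioi hlarge,
          lintegral_const_mul _ (by fun_prop), setLIntegral_const]

theorem setLIntegral_Ioc_rpow_lt_top {μ : Measure ℝ} {β : ℝ} (hβ : 0 ≤ β)
    (h₁ : ∫⁻ z in Ioc 0 1, ENNReal.ofReal (z ^ β) ∂μ < ⊤) (htail : μ (Ioi 1) < ⊤) (R : ℝ) :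
    ∫⁻ z in Ioc 0 R, ENNReal.ofReal (z ^ β) ∂μ < ⊤ := by
  have hbdd : ∫⁻ z in Ioc 1 (max R 1), ENNReal.ofReal (z ^ β) ∂μ < ⊤ :=
    setLIntegral_lt_top_of_le_nnreal (measure_mono Ioc_subset_Ioi_self |>.trans_lt htail).ne
      ⟨(max R 1 ^ β).toNNReal, fun z hz => ENNReal.ofReal_le_ofReal <|
        Real.rpow_le_rpow (zero_le_one.trans hz.1.le) hz.2 hβ⟩
  calc ∫⁻ z in Ioc 0 R, ENNReal.ofReal (z ^ β) ∂μ
      ≤ ∫⁻ z in Ioc 0 1 ∪ Ioc 1 (max R 1), ENNReal.ofReal (z ^ β) ∂μ :=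
        lintegral_mono_set fun z hz => (le_or_gt z 1).imp (⟨hz.1, ·⟩)
          fun h => ⟨h, hz.2.trans (le_max_left _ _)⟩
    _ ≤ _ := lintegral_union_le _ _ _
    _ < ⊤ := ENNReal.add_lt_top.2 ⟨h₁, hbdd⟩

theorem stmt0_general (d : ℕ) (hd : 1 ≤ d) (α : ℝ) (hα : α ∈ Set.Ioo (0:ℝ) 2) (t : ℝ) (ht : 0 < t)
    (lam : MeasureTheory.Measure ℝ)
    (hmom : ∫⁻ z in Set.Ioi (0:ℝ), ENNReal.ofReal (min 1 (z ^ 2)) ∂lam ≠ ⊤) :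
    (∀ r : ℝ, 0 < r →
      tauBar d α t lam r
        = ENNReal.ofReal (r ^ (-(α / (d:ℝ)))) *
            ∫⁻ z in Set.Ioc (0:ℝ) (r * t ^ ((d:ℝ) / α)),
              ENNReal.ofReal (z ^ (α / (d:ℝ))) ∂lam
          + ENNReal.ofReal t * lam (Set.Ioi (r * t ^ ((d:ℝ) / α)))) ∧
    ((∀ r : ℝ, 0 < r → tauBar d α t lam r < ⊤) ↔
      ∫⁻ z in Set.Ioc (0:ℝ) 1, ENNReal.ofReal (z ^ (α / (d:ℝ))) ∂lam < ⊤) := by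
  have hp : 0 < (d:ℝ) / α := div_pos (by exact_mod_cast hd) hα.1
  rw [← inv_div (d:ℝ) α]
  set p := (d:ℝ) / α
  have htail : ∀ c : ℝ, 0 < c → lam (Ioi c) < ⊤ := fun c hc =>
    measure_Ioi_lt_top_of_lintegral_min_one_sq_ne_top hmom hc
  have := sigmaFinite_restrict_Ioi_zero htail
  have key : ∀ r : ℝ, 0 < r → tauBar d α t lam r
      = ENNReal.ofReal (r ^ (-p⁻¹)) * ∫⁻ z in Ioc 0 (r * t ^ p), ENNReal.ofReal (z ^ p⁻¹) ∂lam
        + ENNReal.ofReal t * lam (Ioi (r * t ^ p)) := fun r hr =>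
    prod_setOf_lt_mul_rpow_neg lam hp hr ht.le
  refine ⟨key, fun hfin => ?_, fun h₁ r hr => ?_⟩
  · -- at `r = t ^ (-p)` the integral in `key` runs exactly over `(0, 1]`
    have hr : 0 < t ^ (-p) := Real.rpow_pos_of_pos ht _
    have h := hfin _ hr
    rw [key _ hr, ← Real.rpow_add ht, neg_add_cancel, Real.rpow_zero] at h
    exact ENNReal.lt_top_of_mul_ne_top_right (le_self_add.trans_lt h).ne
      (ENNReal.ofReal_pos.2 (Real.rpow_pos_of_pos hr _)).ne'
  · rw [key r hr]
    exact ENNReal.add_lt_top.2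
      ⟨ENNReal.mul_lt_top ENNReal.ofReal_lt_top
        (setLIntegral_Ioc_rpow_lt_top (inv_pos.2 hp).le h₁ (htail 1 one_pos) _),
       ENNReal.mul_lt_top ENNReal.ofReal_lt_top (htail _ (mul_pos hr (Real.rpow_pos_of_pos ht p)))⟩

theorem stmt0 (d : ℕ) (hd : 1 ≤ d) (α : ℝ) (hα : α ∈ Set.Ioo (0:ℝ) 2) (t : ℝ) (ht : 0 < t)
    (lam : MeasureTheory.Measure ℝ) [SigmaFinite lam]
    (hlam0 : lam (Set.Iic 0) = 0) (hlam_ne : lam ≠ 0)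
    (hmom : ∫⁻ z in Set.Ioi (0:ℝ), ENNReal.ofReal (min 1 (z ^ 2)) ∂lam ≠ ⊤) :
    (∀ r : ℝ, 0 < r →
      tauBar d α t lam r
        = ENNReal.ofReal (r ^ (-(α / (d:ℝ)))) *
            ∫⁻ z in Set.Ioc (0:ℝ) (r * t ^ ((d:ℝ) / α)),
              ENNReal.ofReal (z ^ (α / (d:ℝ))) ∂lam
          + ENNReal.ofReal t * lam (Set.Ioi (r * t ^ ((d:ℝ) / α)))) ∧
    ((∀ r : ℝ, 0 < r → tauBar d α t lam r < ⊤) ↔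
      ∫⁻ z in Set.Ioc (0:ℝ) 1, ENNReal.ofReal (z ^ (α / (d:ℝ))) ∂lam < ⊤) :=
  stmt0_general d hd α hα t ht lam hmom
end

section
/- Assume ∫_{(0,1]} z^{α/d} λ(dz) < ∞, and suppose there are β ∈ [0, α/d) and a slowly varying function l at infinity such that λ̄(r) = l(r)/r^{β} for all r ≥ 1. Then τ̄(r) ∼ (α/(α − dβ)) · t^{1 − dβ/α} · λ̄(r) as r → ∞. -/
open MeasureTheory Set Filter Topology
open scoped ENNReal NNReal

/-- `l : (0,∞) → (0,∞)` is slowly varying at infinity if `l(cr)/l(r) → 1` as `r → ∞`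
for every `c > 0`. -/
def SlowlyVarying (l : ℝ → ℝ) : Prop :=
  ∀ c : ℝ, 0 < c → Filter.Tendsto (fun r => l (c * r) / l r) Filter.atTop (nhds 1)

def RegularlyVarying (f : ℝ → ℝ) (ρ : ℝ) : Prop :=
  ∀ c : ℝ, 0 < c → Tendsto (fun r => f (c * r) / f r) atTop (𝓝 (c ^ ρ))

theorem SlowlyVarying.regularlyVarying {l f : ℝ → ℝ} (hl : SlowlyVarying l)
    (hl_pos : ∀ x, 0 < x → 0 < l x) {β : ℝ} (hf : ∀ᶠ r in atTop, f r = l r / r ^ β) :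
    RegularlyVarying f (-β) := by
  intro c hc
  have hf_c : ∀ᶠ r in atTop, f (c * r) = l (c * r) / (c * r) ^ β :=
    (tendsto_id.const_mul_atTop hc).eventually hf
  refine ((hl c hc).mul_const (c ^ (-β))).congr' ?_ |>.trans (by rw [one_mul])
  filter_upwards [hf, hf_c, eventually_gt_atTop 0] with r hr hcr hr0
  rw [hr, hcr, Real.mul_rpow hc.le hr0.le, Real.rpow_neg hc.le]
  have := hl_pos r hr0
  have := Real.rpow_pos_of_pos hr0 β
  have := Real.rpow_pos_of_pos hc β
  field_simp

theorem le_two_rpow_mul_div_rpow_mul {h : ℝ → ℝ} {γ R : ℝ} (hR : 0 < R) (hγ : 0 ≤ γ)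
    (hanti : AntitoneOn h (Ici (R / 2))) (hnonneg : ∀ y, R ≤ y → 0 ≤ h y)
    (hhalf : ∀ y, R ≤ y → h (y / 2) ≤ 2 ^ γ * h y)
    {x y : ℝ} (hx : R ≤ x) (hxy : x ≤ y) : h x ≤ 2 ^ γ * (y / x) ^ γ * h y := by
  have hx0 : 0 < x := hR.trans_le hx
  obtain ⟨n, hn⟩ := pow_unbounded_of_one_lt (y / x) one_lt_two
  induction n generalizing y with
  | zero =>
    rw [pow_zero, div_lt_one hx0] at hn
    exact absurd hxy hn.not_ge
  | succ n ih =>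
    have hy : R ≤ y := hx.trans hxy
    have h2γ : (0:ℝ) ≤ 2 ^ γ := by positivity
    have hyx : 0 ≤ y / x := div_nonneg (by linarith) hx0.le
    rcases le_or_gt y (2 * x) with hy2 | hy2
    · calc h x ≤ h (y / 2) :=
            hanti (mem_Ici.2 (by linarith)) (mem_Ici.2 (by linarith)) (by linarith)
        _ ≤ 2 ^ γ * h y := hhalf y hy
        _ ≤ 2 ^ γ * (y / x) ^ γ * h y := by
          have : 1 ≤ (y / x) ^ γ := Real.one_le_rpow ((one_le_div hx0).2 hxy) hγ
          have := mul_nonneg h2γ (hnonneg y hy)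
          nlinarith
    · have hn' : y / 2 / x < 2 ^ n := by
        rwa [div_right_comm, div_lt_iff₀ two_pos, ← pow_succ]
      calc h x ≤ 2 ^ γ * (y / 2 / x) ^ γ * h (y / 2) := ih (by linarith) hn'
        _ ≤ 2 ^ γ * (y / 2 / x) ^ γ * (2 ^ γ * h y) := by
          refine mul_le_mul_of_nonneg_left (hhalf y hy) (mul_nonneg h2γ (Real.rpow_nonneg ?_ _))
          exact div_nonneg (by linarith) hx0.le
        _ = 2 ^ γ * (y / x) ^ γ * h y := by
          rw [div_right_comm, Real.div_rpow hyx two_pos.le]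
          field_simp

theorem RegularlyVarying.exists_potter_bound {h : ℝ → ℝ} {β γ : ℝ}
    (hreg : RegularlyVarying h (-β)) (hanti : AntitoneOn h (Ici 1))
    (hpos : ∀ x, 1 ≤ x → 0 < h x) (hβγ : β < γ) (hγ : 0 ≤ γ) :
    ∃ R, 1 ≤ R ∧ ∀ x y, R ≤ x → x ≤ y → h x ≤ 2 ^ γ * (y / x) ^ γ * h y := by
  have hlt : (2⁻¹ : ℝ) ^ (-β) < 2 ^ γ := by
    rw [Real.inv_rpow zero_le_two, Real.rpow_neg zero_le_two, inv_inv]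
    exact Real.rpow_lt_rpow_of_exponent_lt one_lt_two hβγ
  obtain ⟨R₀, hR₀⟩ := eventually_atTop.1 <|
    ((hreg 2⁻¹ (by norm_num)).eventually (gt_mem_nhds hlt)).and (eventually_ge_atTop 2)
  set R := max R₀ 2
  have hR2 : 2 ≤ R := le_max_right _ _
  have hhalf : ∀ y, R ≤ y → h (y / 2) ≤ 2 ^ γ * h y := fun y hy => by
    obtain ⟨hlt, hy2⟩ := hR₀ y ((le_max_left _ _).trans hy)
    rw [← inv_mul_eq_div]
    exact ((div_lt_iff₀ (hpos y (by linarith))).1 hlt).le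
  refine ⟨R, by linarith, fun x y hx hxy => ?_⟩
  exact le_two_rpow_mul_div_rpow_mul (by linarith) hγ
    (hanti.mono (Ici_subset_Ici.2 (by linarith))) (fun y hy => (hpos y (by linarith)).le) hhalf
    hx hxy

theorem tendsto_div_of_regularlyVarying {F : ℝ → ℝ≥0∞} (hfin : ∀ x, 1 ≤ x → F x ≠ ⊤)
    (hF0 : ∀ x, 1 ≤ x → F x ≠ 0) {ρ : ℝ} (hreg : RegularlyVarying (fun x => (F x).toReal) ρ)
    {c : ℝ} (hc : 0 < c) :
    Tendsto (fun r => F (c * r) / F r) atTop (𝓝 (ENNReal.ofReal (c ^ ρ))) := by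
  refine (ENNReal.tendsto_ofReal (hreg c hc)).congr' ?_
  filter_upwards [eventually_ge_atTop 1, (tendsto_id.const_mul_atTop hc).eventually_ge_atTop 1]
    with r hr hcr
  rw [ENNReal.ofReal_div_of_pos (ENNReal.toReal_pos (hF0 r hr) (hfin r hr)),
    ENNReal.ofReal_toReal (hfin r hr), ENNReal.ofReal_toReal (hfin (c * r) hcr)]

theorem Antitone.apply_max_le_of_potter_bound {F : ℝ → ℝ≥0∞} (hF : Antitone F)
    {p γ R r s : ℝ} (hγ : 0 ≤ γ)
    (hpotter : ∀ x y, R ≤ x → x ≤ y → F x ≤ ENNReal.ofReal (2 ^ γ * (y / x) ^ γ) * F y)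
    (hr0 : 0 < r) (hs : 0 < s) :
    F (max (r * s ^ p) R) ≤ ENNReal.ofReal (2 ^ γ * (1 + s ^ (-(p * γ)))) * F r := by
  set x := max (r * s ^ p) R
  have hsp : 0 < s ^ p := Real.rpow_pos_of_pos hs p
  have hrs : 0 < r * s ^ p := mul_pos hr0 hsp
  have hsγ : 0 ≤ s ^ (-(p * γ)) := Real.rpow_nonneg hs.le _
  have h2γ : 1 ≤ (2 : ℝ) ^ γ := Real.one_le_rpow one_le_two hγ
  rcases le_or_gt x r with hxr | hrx
  · refine (hpotter x r (le_max_right _ _) hxr).trans (mul_le_mul_left ?_ _)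
    refine ENNReal.ofReal_le_ofReal (mul_le_mul_of_nonneg_left ?_ (by positivity))
    have hx0 : 0 < x := hrs.trans_le (le_max_left _ _)
    calc (r / x) ^ γ ≤ (r / (r * s ^ p)) ^ γ := by
          gcongr
          exact le_max_left _ _
      _ = s ^ (-(p * γ)) := by
          rw [div_mul_cancel_left₀ hr0.ne', Real.inv_rpow hsp.le, ← Real.rpow_mul hs.le,
            Real.rpow_neg hs.le]
      _ ≤ 1 + s ^ (-(p * γ)) := le_add_of_nonneg_left zero_le_one
  · calc F x ≤ F r := hF hrx.le
      _ = ENNReal.ofReal 1 * F r := by rw [ENNReal.ofReal_one, one_mul]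
      _ ≤ _ := by gcongr; nlinarith

theorem integrableOn_Ioc_rpow {q t : ℝ} (hq : -1 < q) :
    IntegrableOn (fun s : ℝ => s ^ q) (Ioc 0 t) :=
  (intervalIntegrable_iff.1 (intervalIntegral.intervalIntegrable_rpow' hq)).mono_set Ioc_subset_uIoc

theorem lintegral_Ioc_rpow {q t : ℝ} (hq : -1 < q) (ht : 0 ≤ t) :
    ∫⁻ s in Ioc 0 t, ENNReal.ofReal (s ^ q) = ENNReal.ofReal (t ^ (q + 1) / (q + 1)) := by
  rw [← ofReal_integral_eq_lintegral_ofReal (integrableOn_Ioc_rpow hq)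
    ((ae_restrict_mem measurableSet_Ioc).mono fun s hs => Real.rpow_nonneg hs.1.le q),
    ← intervalIntegral.integral_of_le ht, integral_rpow (Or.inl hq),
    Real.zero_rpow (by linarith), sub_zero]

theorem tendsto_lintegral_max_div {F : ℝ → ℝ≥0∞} (hF : Antitone F) (hfin : ∀ x, 1 ≤ x → F x ≠ ⊤)
    (hF0 : ∀ x, 1 ≤ x → F x ≠ 0) {β p γ R t : ℝ}
    (hreg : RegularlyVarying (fun x => (F x).toReal) (-β)) (hγ : 0 ≤ γ) (hpγ : p * γ < 1)
    (hpotter : ∀ x y, R ≤ x → x ≤ y → F x ≤ ENNReal.ofReal (2 ^ γ * (y / x) ^ γ) * F y) :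
    Tendsto (fun r => (∫⁻ s in Ioc 0 t, F (max (r * s ^ p) R)) / F r) atTop
      (𝓝 (∫⁻ s in Ioc 0 t, ENNReal.ofReal ((s ^ p) ^ (-β)))) := by
  have hbound : ∫⁻ s in Ioc 0 t, ENNReal.ofReal (2 ^ γ * (1 + s ^ (-(p * γ)))) ≠ ⊤ :=
    (((integrableOn_const (by simp)).add (integrableOn_Ioc_rpow (by linarith))).const_mul
      _).lintegral_lt_top.ne
  have hlim := tendsto_lintegral_filter_of_dominated_convergence
    (μ := volume.restrict (Ioc 0 t)) (F := fun r s => F (max (r * s ^ p) R) / F r)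
    (f := fun s => ENNReal.ofReal ((s ^ p) ^ (-β))) _
    (Eventually.of_forall fun r => (hF.measurable.comp (by fun_prop)).div_const (F r))
    ((eventually_ge_atTop 1).mono fun r hr => (ae_restrict_mem measurableSet_Ioc).mono
      fun s hs => ENNReal.div_le_of_le_mul (hF.apply_max_le_of_potter_bound hγ hpotter
        (by linarith) hs.1))
    hbound
    ((ae_restrict_mem measurableSet_Ioc).mono fun s hs => ?_)
  · refine hlim.congr' ((eventually_ge_atTop 1).mono fun r hr => ?_)
    simp_rw [div_eq_mul_inv]
    exact lintegral_mul_const' _ _ (ENNReal.inv_ne_top.2 (hF0 r hr))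
  · have hsp : 0 < s ^ p := Real.rpow_pos_of_pos hs.1 p
    refine (tendsto_div_of_regularlyVarying hfin hF0 hreg hsp).congr' ?_
    filter_upwards [(tendsto_id.const_mul_atTop hsp).eventually_ge_atTop R] with r hr
    rw [max_eq_left (by rwa [mul_comm]), mul_comm]

theorem lintegral_measure_Ioc_le (lam : Measure ℝ) [SigmaFinite lam] {p r R t : ℝ} (hp : 0 < p)
    (hr : 0 < r) :
    ∫⁻ s in Ioc 0 t, lam (Ioc (r * s ^ p) R) ≤
      ENNReal.ofReal (r ^ (-p⁻¹)) * ∫⁻ z in Ioc 0 R, ENNReal.ofReal (z ^ p⁻¹) ∂lam := by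
  set E := {q : ℝ × ℝ | r * q.1 ^ p < q.2}
  have hE : MeasurableSet E := measurableSet_lt (by fun_prop) measurable_snd
  calc ∫⁻ s in Ioc 0 t, lam (Ioc (r * s ^ p) R)
      = ∫⁻ s in Ioc 0 t, lam.restrict (Ioc 0 R) (Prod.mk s ⁻¹' E) := by
        refine setLIntegral_congr_fun measurableSet_Ioc fun s hs => ?_
        have hrs : 0 ≤ r * s ^ p := (mul_pos hr (Real.rpow_pos_of_pos hs.1 p)).le
        rw [show Prod.mk s ⁻¹' E = Ioi (r * s ^ p) from rfl,
          Measure.restrict_apply measurableSet_Ioi, inter_comm, Ioc_inter_Ioi, sup_eq_right.2 hrs]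
    _ = ∫⁻ z in Ioc 0 R, volume.restrict (Ioc 0 t) ((fun s => (s, z)) ⁻¹' E) ∂lam := by
        rw [← Measure.prod_apply hE, Measure.prod_apply_symm hE]
    _ ≤ ∫⁻ z in Ioc 0 R, ENNReal.ofReal (r ^ (-p⁻¹) * z ^ p⁻¹) ∂lam := by
        refine setLIntegral_mono' measurableSet_Ioc fun z hz => ?_
        have hzr : 0 < z / r := div_pos hz.1 hr
        calc volume.restrict (Ioc 0 t) ((fun s => (s, z)) ⁻¹' E)
            ≤ volume (Ioc 0 ((z / r) ^ p⁻¹)) := by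
              rw [Measure.restrict_apply' measurableSet_Ioc]
              refine measure_mono fun s ⟨hs, hs0⟩ => ⟨hs0.1, ?_⟩
              rw [Real.le_rpow_inv_iff_of_pos hs0.1.le hzr.le hp, le_div_iff₀ hr, mul_comm]
              exact hs.le
          _ = ENNReal.ofReal (r ^ (-p⁻¹) * z ^ p⁻¹) := by
              rw [Real.volume_Ioc, sub_zero, Real.div_rpow hz.1.le hr.le, Real.rpow_neg hr.le,
                div_eq_inv_mul]
    _ = _ := by
        simp_rw [ENNReal.ofReal_mul (Real.rpow_nonneg hr.le _)]
        exact lintegral_const_mul' _ _ ENNReal.ofReal_ne_top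

theorem setLIntegral_Ioc_rpow_ne_top (lam : Measure ℝ) {q R : ℝ} (hq : 0 ≤ q) (hR : 1 ≤ R)
    (hsmall : ∫⁻ z in Ioc 0 1, ENNReal.ofReal (z ^ q) ∂lam ≠ ⊤) (hfin : lam (Ioi 1) ≠ ⊤) :
    ∫⁻ z in Ioc 0 R, ENNReal.ofReal (z ^ q) ∂lam ≠ ⊤ := by
  rw [← Ioc_union_Ioc_eq_Ioc zero_le_one hR,
    lintegral_union measurableSet_Ioc (Ioc_disjoint_Ioc_of_le le_rfl)]
  refine ENNReal.add_ne_top.2 ⟨hsmall, ne_top_of_le_ne_top ?_ (setLIntegral_mono' measurableSet_Ioc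
    fun z hz => ENNReal.ofReal_le_ofReal (Real.rpow_le_rpow (by linarith [hz.1]) hz.2 hq))⟩
  rw [setLIntegral_const]
  exact ENNReal.mul_ne_top ENNReal.ofReal_ne_top
    (ne_top_of_le_ne_top hfin (measure_mono Ioc_subset_Ioi_self))

theorem tendsto_lintegral_measure_Ioc_div (lam : Measure ℝ) [SigmaFinite lam] {p γ R t : ℝ}
    (hp : 0 < p) (hpγ : p * γ < 1) (hR : 1 ≤ R)
    (hK : ∫⁻ z in Ioc 0 R, ENNReal.ofReal (z ^ p⁻¹) ∂lam ≠ ⊤)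
    (hL0 : lam (Ioi R) ≠ 0) (hL : lam (Ioi R) ≠ ⊤)
    (hpotter : ∀ x y, R ≤ x → x ≤ y →
      lam (Ioi x) ≤ ENNReal.ofReal (2 ^ γ * (y / x) ^ γ) * lam (Ioi y)) :
    Tendsto (fun r => (∫⁻ s in Ioc 0 t, lam (Ioc (r * s ^ p) R)) / lam (Ioi r)) atTop (𝓝 0) := by
  set K := ∫⁻ z in Ioc 0 R, ENNReal.ofReal (z ^ p⁻¹) ∂lam
  set L := lam (Ioi R)
  have hexp : 0 < p⁻¹ - γ := by
    rw [sub_pos, ← one_div, lt_div_iff₀' hp]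
    exact hpγ
  have hreal : Tendsto (fun r : ℝ => r ^ (-p⁻¹) * (2 ^ γ * (r / R) ^ γ)) atTop (𝓝 0) := by
    have := (tendsto_rpow_neg_atTop hexp).const_mul (2 ^ γ / R ^ γ)
    rw [mul_zero] at this
    refine this.congr' ((eventually_gt_atTop 0).mono fun r hr => ?_)
    dsimp only
    rw [Real.div_rpow hr.le (by linarith), Real.rpow_neg hr.le, Real.rpow_neg hr.le,
      Real.rpow_sub hr]
    field_simp
  have hupper := ENNReal.Tendsto.mul_const (b := K / L) (ENNReal.tendsto_ofReal hreal)
    (Or.inr (ENNReal.div_ne_top hK hL0))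
  rw [ENNReal.ofReal_zero, zero_mul] at hupper
  refine tendsto_of_tendsto_of_tendsto_of_le_of_le' tendsto_const_nhds hupper
    (Eventually.of_forall fun r => zero_le) ((eventually_ge_atTop R).mono fun r hr => ?_)
  have hr0 : 0 < r := by linarith
  refine ENNReal.div_le_of_le_mul ?_
  calc ∫⁻ s in Ioc 0 t, lam (Ioc (r * s ^ p) R)
      ≤ ENNReal.ofReal (r ^ (-p⁻¹)) * K := lintegral_measure_Ioc_le lam hp hr0
    _ = ENNReal.ofReal (r ^ (-p⁻¹)) * (K / L * L) := by rw [ENNReal.div_mul_cancel hL0 hL]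
    _ ≤ ENNReal.ofReal (r ^ (-p⁻¹)) *
        (K / L * (ENNReal.ofReal (2 ^ γ * (r / R) ^ γ) * lam (Ioi r))) := by
      gcongr
      exact hpotter R r le_rfl hr
    _ = ENNReal.ofReal (r ^ (-p⁻¹) * (2 ^ γ * (r / R) ^ γ)) * (K / L) * lam (Ioi r) := by
      rw [ENNReal.ofReal_mul (Real.rpow_nonneg hr0.le _)]
      ring

theorem tendsto_lintegral_measure_Ioi_div (lam : Measure ℝ) [SigmaFinite lam] {p β t : ℝ}
    (hp : 0 < p) (ht : 0 ≤ t) (hβ : 0 ≤ β) (hpβ : p * β < 1)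
    (htail : ∀ r, 1 ≤ r → 0 < (lam (Ioi r)).toReal)
    (hreg : RegularlyVarying (fun r => (lam (Ioi r)).toReal) (-β))
    (hsmall : ∫⁻ z in Ioc 0 1, ENNReal.ofReal (z ^ p⁻¹) ∂lam ≠ ⊤) :
    Tendsto (fun r => (∫⁻ s in Ioc 0 t, lam (Ioi (r * s ^ p))) / lam (Ioi r)) atTop
      (𝓝 (ENNReal.ofReal (t ^ (1 - p * β) / (1 - p * β)))) := by
  have hanti : Antitone fun x => lam (Ioi x) := fun x y hxy => measure_mono (Ioi_subset_Ioi hxy)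
  have hfin : ∀ x, 1 ≤ x → lam (Ioi x) ≠ ⊤ := fun x hx =>
    (ENNReal.toReal_pos_iff.1 (htail x hx)).2.ne
  have hF0 : ∀ x, 1 ≤ x → lam (Ioi x) ≠ 0 := fun x hx =>
    (ENNReal.toReal_pos_iff.1 (htail x hx)).1.ne'
  obtain ⟨γ, hβγ, hγp⟩ := exists_between (show β < p⁻¹ by rwa [← one_div, lt_div_iff₀' hp])
  have hpγ : p * γ < 1 := by rwa [← one_div, lt_div_iff₀' hp] at hγp
  obtain ⟨R, hR, hpot⟩ := hreg.exists_potter_bound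
    (fun x hx y hy hxy => ENNReal.toReal_mono (hfin x hx) (hanti hxy)) htail hβγ (by linarith)
  have hpotter : ∀ x y, R ≤ x → x ≤ y →
      lam (Ioi x) ≤ ENNReal.ofReal (2 ^ γ * (y / x) ^ γ) * lam (Ioi y) := fun x y hx hxy => by
    rw [← ENNReal.ofReal_toReal (hfin x (by linarith)),
      ← ENNReal.ofReal_toReal (hfin y (by linarith)),
      ← ENNReal.ofReal_mul (mul_nonneg (by positivity)
        (Real.rpow_nonneg (div_nonneg (by linarith) (by linarith)) _))]
    exact ENNReal.ofReal_le_ofReal (hpot x y hx hxy)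
  have hlimit : ∫⁻ s in Ioc 0 t, ENNReal.ofReal ((s ^ p) ^ (-β)) =
      ENNReal.ofReal (t ^ (1 - p * β) / (1 - p * β)) := by
    rw [setLIntegral_congr_fun measurableSet_Ioc fun s hs => by
      rw [← Real.rpow_mul hs.1.le, mul_neg], lintegral_Ioc_rpow (by linarith) ht, neg_add_eq_sub]
  have hA := tendsto_lintegral_max_div hanti hfin hF0 hreg (t := t) (by linarith) hpγ hpotter
  have hB := tendsto_lintegral_measure_Ioc_div lam (t := t) hp hpγ hR
    (setLIntegral_Ioc_rpow_ne_top lam (inv_pos.2 hp).le hR hsmall (hfin 1 le_rfl))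
    (hF0 R hR) (hfin R hR) hpotter
  rw [hlimit] at hA
  refine tendsto_of_tendsto_of_tendsto_of_le_of_le hA (by simpa using hA.add hB) (fun r => ?_)
    (fun r => ?_)
  · exact ENNReal.div_le_div_right (lintegral_mono fun s =>
      measure_mono (Ioi_subset_Ioi (le_max_left _ _))) _
  · have hmeas : Measurable fun s => lam (Ioi (max (r * s ^ p) R)) :=
      hanti.measurable.comp (by fun_prop)
    rw [← ENNReal.add_div, ← lintegral_add_left hmeas]
    refine ENNReal.div_le_div_right (lintegral_mono fun s => (measure_mono fun z hz => ?_).trans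
      (measure_union_le _ _)) _
    rcases le_or_gt z R with hzR | hRz
    · exact Or.inr ⟨hz, hzR⟩
    · exact Or.inl (max_lt hz hRz)

theorem tauBar_eq_lintegral (d : ℕ) (α t : ℝ) (lam : Measure ℝ) [SigmaFinite lam] {r : ℝ}
    (hr : 0 ≤ r) : tauBar d α t lam r = ∫⁻ s in Ioc 0 t, lam (Ioi (r * s ^ ((d : ℝ) / α))) := by
  rw [tauBar, Measure.prod_apply (measurableSet_lt measurable_const (by fun_prop))]
  refine setLIntegral_congr_fun measurableSet_Ioc fun s hs => ?_
  have hsp : 0 < s ^ ((d : ℝ) / α) := Real.rpow_pos_of_pos hs.1 _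
  have hpre : Prod.mk s ⁻¹' {p : ℝ × ℝ | r < p.2 * p.1 ^ (-((d : ℝ) / α))} =
      Ioi (r * s ^ ((d : ℝ) / α)) := by
    ext z
    rw [mem_preimage, mem_ofPred_eq, mem_Ioi, Real.rpow_neg hs.1.le, ← div_eq_mul_inv,
      lt_div_iff₀ hsp]
  rw [hpre, Measure.restrict_apply measurableSet_Ioi,
    inter_eq_left.2 (Ioi_subset_Ioi (by positivity))]

theorem stmt3_general (d : ℕ) (hd : 1 ≤ d) (α : ℝ) (hα : α ∈ Set.Ioo (0:ℝ) 2) (t : ℝ) (ht : 0 < t)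
    (lam : MeasureTheory.Measure ℝ) [SigmaFinite lam]
    (hsmall : ∫⁻ z in Set.Ioc (0:ℝ) 1, ENNReal.ofReal (z ^ (α / (d:ℝ))) ∂lam ≠ ⊤)
    (β : ℝ) (hβ0 : 0 ≤ β) (hβ : β < α / (d:ℝ))
    (l : ℝ → ℝ) (hl : SlowlyVarying l) (hl_pos : ∀ x : ℝ, 0 < x → 0 < l x)
    (hlaml : ∀ r : ℝ, 1 ≤ r → (lam (Set.Ioi r)).toReal = l r / r ^ β) :
    Filter.Tendsto
      (fun r : ℝ => (tauBar d α t lam r).toReal /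
        (α / (α - (d:ℝ) * β) * t ^ (1 - (d:ℝ) * β / α) * (lam (Set.Ioi r)).toReal))
      Filter.atTop (nhds 1) := by
  have hα0 : 0 < α := hα.1
  have hd0 : (0 : ℝ) < d := by exact_mod_cast hd
  have hdβ : d * β < α := by rwa [lt_div_iff₀ hd0, mul_comm] at hβ
  have hpβ : (d : ℝ) / α * β < 1 := by rwa [div_mul_eq_mul_div, div_lt_one hα0]
  have htail : ∀ r, 1 ≤ r → 0 < (lam (Ioi r)).toReal := fun r hr => by
    rw [hlaml r hr]
    exact div_pos (hl_pos r (by linarith)) (Real.rpow_pos_of_pos (by linarith) β)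
  have hlim := tendsto_lintegral_measure_Ioi_div lam (div_pos hd0 hα0) ht.le hβ0 hpβ htail
    (hl.regularlyVarying hl_pos (eventually_atTop.2 ⟨1, hlaml⟩)) (by rwa [inv_div])
  set C := t ^ (1 - (d : ℝ) / α * β) / (1 - (d : ℝ) / α * β) with hC_def
  have hC : α / (α - d * β) * t ^ (1 - d * β / α) = C := by
    have : α - d * β ≠ 0 := by linarith
    rw [hC_def, div_mul_eq_mul_div (d : ℝ)]
    field_simp
  have hC0 : 0 < C := div_pos (Real.rpow_pos_of_pos ht _) (by linarith)
  have hratio := ((ENNReal.tendsto_toReal ENNReal.ofReal_ne_top).comp hlim).div_const C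
  rw [ENNReal.toReal_ofReal hC0.le, div_self hC0.ne'] at hratio
  refine hratio.congr' ((eventually_ge_atTop 0).mono fun r hr => ?_)
  dsimp only
  rw [Function.comp_apply, ENNReal.toReal_div, hC, div_mul_eq_div_div_swap,
    tauBar_eq_lintegral d α t lam hr]

theorem stmt3 (d : ℕ) (hd : 1 ≤ d) (α : ℝ) (hα : α ∈ Set.Ioo (0:ℝ) 2) (t : ℝ) (ht : 0 < t)
    (lam : MeasureTheory.Measure ℝ) [SigmaFinite lam]
    (hlam0 : lam (Set.Iic 0) = 0) (hlam_ne : lam ≠ 0)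
    (hmom : ∫⁻ z in Set.Ioi (0:ℝ), ENNReal.ofReal (min 1 (z ^ 2)) ∂lam ≠ ⊤)
    (hsmall : ∫⁻ z in Set.Ioc (0:ℝ) 1, ENNReal.ofReal (z ^ (α / (d:ℝ))) ∂lam ≠ ⊤)
    (β : ℝ) (hβ0 : 0 ≤ β) (hβ : β < α / (d:ℝ))
    (l : ℝ → ℝ) (hl : SlowlyVarying l) (hl_pos : ∀ x : ℝ, 0 < x → 0 < l x)
    (hlaml : ∀ r : ℝ, 1 ≤ r → (lam (Set.Ioi r)).toReal = l r / r ^ β) :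
    Filter.Tendsto
      (fun r : ℝ => (tauBar d α t lam r).toReal /
        (α / (α - (d:ℝ) * β) * t ^ (1 - (d:ℝ) * β / α) * (lam (Set.Ioi r)).toReal))
      Filter.atTop (nhds 1) :=
  stmt3_general d hd α hα t ht lam hsmall β hβ0 hβ l hl hl_pos hlaml
end

section
/- Assume ∫_{(0,1]} z^{1+α/d} λ(dz) < ∞ and ∫_{(1,∞)} z^{d/(d+α)} λ(dz) < ∞, and assume that either (a) ∫_{(1,∞)} z^{1+α/d} λ(dz) < ∞, or (b) there exist constants δ > d/(d+α), c > 0 and M > 0 such that λ̄(ry) ≤ c y^{-δ} λ̄(r) for all r > M and y > M. Then η̄₀(r) ≍ η̄(r) as r → ∞. -/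
/-!
For `r ≥ 1`, `η̄(r)` and `η̄₀(r)` differ only by the far region `|y| > 1/2`. There the tail bound
`p_s(y) ≤ C s |y|^{-(d+α)}` forces `z > r/m`, with `m = 2^{d+α} C t`, and confines `y` to a ball
of volume `≍ (z/r)^{d/(d+α)}`, so the far part of `η̄(r)` is
`≲ r^{-d/(d+α)} ∫_{z > r/m} z^{d/(d+α)} λ(dz)`.
Under (a) this is `O(r^{-(1+α/d)})`; under (b) a layer-cake computation makes it `O(λ̄(r/m))`.
Conversely, boxes of small times with `y` near `0` bound `η̄₀(r)` from below by the same
quantities: times `s ≍ r^{-α/d}` with jumps above a fixed level give `η̄₀(r) ≳ r^{-(1+α/d)}`, and a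
fixed range of small times with jumps above `r/m` gives `η̄₀(r) ≳ λ̄(r/m)`. Hence
`η̄₀ ≤ η̄ ≤ (1 + K) η̄₀` eventually.
-/

open MeasureTheory Set Filter Topology
open scoped ENNReal NNReal

/-- The heat-kernel profile `p_s(y) = s^{-d/α} g(|y|/s^{1/α})`. -/
noncomputable def pker (d : ℕ) (α : ℝ) (g : ℝ → ℝ) (s : ℝ)
    (y : EuclideanSpace ℝ (Fin d)) : ℝ :=
  s ^ (-((d : ℝ) / α)) * g (‖y‖ / s ^ ((1 : ℝ) / α))

/-- `etaBar d α t g lam r = η̄(r)`, where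
`η(B) = (Leb_(0,t] ⊗ Leb_{ℝ^d} ⊗ λ)({(s,y,z) : p_s(y)·z ∈ B})` and `η̄(r) = η((r,∞))`. -/
noncomputable def etaBar (d : ℕ) (α t : ℝ) (g : ℝ → ℝ) (lam : MeasureTheory.Measure ℝ)
    (r : ℝ) : ℝ≥0∞ :=
  ((MeasureTheory.volume.restrict (Set.Ioc (0:ℝ) t)).prod
      ((MeasureTheory.volume : MeasureTheory.Measure (EuclideanSpace ℝ (Fin d))).prod
        (lam.restrict (Set.Ioi (0:ℝ)))))
    {q : ℝ × EuclideanSpace ℝ (Fin d) × ℝ | r < pker d α g q.1 q.2.1 * q.2.2}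

/-- `etaZeroBar d α t g lam r = η̄₀(r)`, where
`η₀(B) = (Leb_(0,t] ⊗ Leb_{ℝ^d} ⊗ λ)({(s,y,z) : |y| ≤ 1/2, p_s(y)·z ∈ B ∩ (e_{d,α},∞)})`,
`e_{d,α} = 1` if `d < α` and `e_{d,α} = 0` if `d ≥ α`, and `η̄₀(r) = η₀((r,∞))`. -/
noncomputable def etaZeroBar (d : ℕ) (α t : ℝ) (g : ℝ → ℝ) (lam : MeasureTheory.Measure ℝ)
    (r : ℝ) : ℝ≥0∞ :=
  ((MeasureTheory.volume.restrict (Set.Ioc (0:ℝ) t)).prod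
      ((MeasureTheory.volume : MeasureTheory.Measure (EuclideanSpace ℝ (Fin d))).prod
        (lam.restrict (Set.Ioi (0:ℝ)))))
    {q : ℝ × EuclideanSpace ℝ (Fin d) × ℝ |
      ‖q.2.1‖ ≤ 1 / 2 ∧
        max r (if (d:ℝ) < α then 1 else 0) < pker d α g q.1 q.2.1 * q.2.2}

theorem exists_le_mul_rpow_neg_of_tendsto {g : ℝ → ℝ} {p c : ℝ} (hp : 0 ≤ p)
    (hg : AntitoneOn g (Ici 0)) (hlim : Tendsto (fun x => x ^ p * g x) atTop (𝓝 c)) :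
    ∃ C, 0 < C ∧ ∀ x, 0 < x → g x ≤ C * x ^ (-p) := by
  obtain ⟨a, ha⟩ := eventually_atTop.mp (hlim.eventually (eventually_le_nhds (lt_add_one c)))
  set x₀ := max a 1
  refine ⟨max 1 (max (c + 1) (|g 0| * x₀ ^ p)), by positivity, fun x hx => ?_⟩
  rw [Real.rpow_neg hx.le, ← div_eq_mul_inv, le_div_iff₀ (by positivity)]
  refine le_trans ?_ (le_max_right _ _)
  rcases le_or_gt x₀ x with hx₀ | hx₀
  · calc g x * x ^ p = x ^ p * g x := mul_comm _ _
      _ ≤ c + 1 := ha x (le_trans (le_max_left _ _) hx₀)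
      _ ≤ _ := le_max_left _ _
  · have hgx : g x ≤ |g 0| := (hg self_mem_Ici hx.le hx.le).trans (le_abs_self _)
    have hxp : x ^ p ≤ x₀ ^ p := Real.rpow_le_rpow hx.le hx₀.le hp
    exact (mul_le_mul hgx hxp (by positivity) (abs_nonneg _)).trans (le_max_right _ _)

theorem measure_Ioi_ne_top_of_lintegral_min_sq {lam : Measure ℝ}
    (h : ∫⁻ z in Ioi (0:ℝ), ENNReal.ofReal (min 1 (z ^ 2)) ∂lam ≠ ⊤) {R : ℝ} (hR : 0 < R) :
    lam (Ioi R) ≠ ⊤ := by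
  have hle : ENNReal.ofReal (min 1 (R ^ 2)) * lam (Ioi R)
      ≤ ∫⁻ z in Ioi (0:ℝ), ENNReal.ofReal (min 1 (z ^ 2)) ∂lam := by
    rw [← setLIntegral_const]
    refine (setLIntegral_mono (by fun_prop) fun z hz => ?_).trans
      (lintegral_mono_set (Ioi_subset_Ioi hR.le))
    exact ENNReal.ofReal_le_ofReal (min_le_min le_rfl (pow_le_pow_left₀ hR.le (le_of_lt hz) 2))
  refine fun htop => h (top_le_iff.mp (le_trans (le_of_eq ?_) hle))
  rw [htop, ENNReal.mul_top (ENNReal.ofReal_pos.2 (lt_min one_pos (by positivity))).ne']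

theorem exists_pos_measure_Ioi_ne_zero {lam : Measure ℝ} (h0 : lam (Iic 0) = 0) (hne : lam ≠ 0) :
    ∃ z, 0 < z ∧ lam (Ioi z) ≠ 0 := by
  by_contra! h
  have hIoi : Ioi (0:ℝ) = ⋃ n : ℕ, Ioi (1 / ((n:ℝ) + 1)) := by
    ext z
    simp only [mem_Ioi, mem_iUnion]
    exact ⟨fun hz => (exists_nat_one_div_lt hz).imp fun _ hn => hn,
      fun ⟨n, hn⟩ => lt_trans (by positivity) hn⟩
  have hIoi0 : lam (Ioi 0) = 0 := by
    rw [hIoi]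
    exact measure_iUnion_null fun n => h _ (by positivity)
  refine hne (Measure.measure_univ_eq_zero.mp ?_)
  rw [← Iic_union_Ioi (a := (0:ℝ))]
  exact measure_union_null h0 hIoi0

theorem lintegral_Ioi_rpow_of_lt {s a : ℝ} (hs : s < -1) (ha : 0 < a) :
    ∫⁻ v in Ioi a, ENNReal.ofReal (v ^ s) = ENNReal.ofReal (-a ^ (s + 1) / (s + 1)) := by
  rw [← integral_Ioi_rpow_of_lt hs ha, ofReal_integral_eq_lintegral_ofReal
    (integrableOn_Ioi_rpow_of_lt hs ha)]
  exact (ae_restrict_iff' measurableSet_Ioi).2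
    (ae_of_all _ fun v hv => Real.rpow_nonneg (ha.trans hv).le _)

theorem setLIntegral_Ioi_rpow_le_of_le {lam : Measure ℝ} {β γ R : ℝ} (hβγ : β ≤ γ) (hR : 1 ≤ R) :
    ∫⁻ z in Ioi R, ENNReal.ofReal (z ^ β) ∂lam
      ≤ ENNReal.ofReal (R ^ (β - γ)) * ∫⁻ z in Ioi (1:ℝ), ENNReal.ofReal (z ^ γ) ∂lam := by
  have hR0 : 0 < R := one_pos.trans_le hR
  calc ∫⁻ z in Ioi R, ENNReal.ofReal (z ^ β) ∂lam
      ≤ ∫⁻ z in Ioi R, ENNReal.ofReal (R ^ (β - γ)) * ENNReal.ofReal (z ^ γ) ∂lam := by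
        refine setLIntegral_mono (by fun_prop) fun z hz => ?_
        have hz0 : 0 < z := hR0.trans hz
        rw [← ENNReal.ofReal_mul (by positivity), show β = (β - γ) + γ by ring,
          Real.rpow_add hz0, add_sub_cancel_right]
        exact ENNReal.ofReal_le_ofReal (mul_le_mul_of_nonneg_right
          (Real.rpow_le_rpow_of_nonpos hR0 (le_of_lt hz) (by linarith)) (by positivity))
    _ = ENNReal.ofReal (R ^ (β - γ)) * ∫⁻ z in Ioi R, ENNReal.ofReal (z ^ γ) ∂lam :=
        lintegral_const_mul _ (by fun_prop)
    _ ≤ _ := by gcongr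

theorem measure_Ioi_mul_le_of_toReal_le {lam : Measure ℝ}
    (hfin : ∀ x, 0 < x → lam (Ioi x) ≠ ⊤) {δ c M : ℝ} (hδ : 0 ≤ δ)
    (hreg : ∀ r y : ℝ, M < r → M < y →
      (lam (Ioi (r * y))).toReal ≤ c * y ^ (-δ) * (lam (Ioi r)).toReal)
    {R y : ℝ} (hR : max M 1 < R) (hy : 1 < y) :
    lam (Ioi (R * y)) ≤ ENNReal.ofReal (max c (max M 1 ^ δ) * y ^ (-δ)) * lam (Ioi R) := by
  have hR0 : 0 < R := one_pos.trans (lt_of_le_of_lt (le_max_right _ _) hR)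
  have hy0 : 0 < y := one_pos.trans hy
  rcases le_or_gt y (max M 1) with hyM | hyM
  · have hone : 1 ≤ max c (max M 1 ^ δ) * y ^ (-δ) := by
      rw [Real.rpow_neg hy0.le, ← div_eq_mul_inv, one_le_div (by positivity)]
      exact (Real.rpow_le_rpow hy0.le hyM hδ).trans (le_max_right _ _)
    calc lam (Ioi (R * y)) ≤ lam (Ioi R) :=
          measure_mono (Ioi_subset_Ioi (le_mul_of_one_le_right hR0.le hy.le))
      _ ≤ _ := le_mul_of_one_le_left zero_le (ENNReal.one_le_ofReal.2 hone)
  · have hle := hreg R y ((le_max_left _ _).trans_lt hR) ((le_max_left _ _).trans_lt hyM)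
    rw [← ENNReal.ofReal_toReal (hfin _ (by positivity)),
      ← ENNReal.ofReal_toReal (hfin R hR0), ← ENNReal.ofReal_mul (by positivity)]
    refine ENNReal.ofReal_le_ofReal (hle.trans ?_)
    gcongr
    exact le_max_left _ _

theorem measure_restrict_Ioi_rpow_lt_le {lam : Measure ℝ} {β δ C R : ℝ} (hβ : 0 < β)
    (hR : 0 < R)
    (hreg : ∀ y, 1 < y → lam (Ioi (R * y)) ≤ ENNReal.ofReal (C * y ^ (-δ)) * lam (Ioi R))
    {v : ℝ} (hv : R ^ β < v) :
    lam.restrict (Ioi R) {z | v < z ^ β}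
      ≤ ENNReal.ofReal (C * R ^ δ) * lam (Ioi R) * ENNReal.ofReal (v ^ (-(δ / β))) := by
  have hv0 : 0 < v := (by positivity : 0 < R ^ β).trans hv
  have hvR : R < v ^ (1 / β) := by
    have := Real.rpow_lt_rpow (by positivity) hv (by positivity : 0 < 1 / β)
    rwa [← Real.rpow_mul hR.le, mul_one_div_cancel hβ.ne', Real.rpow_one] at this
  have hsub : {z | v < z ^ β} ∩ Ioi R ⊆ Ioi (R * (v ^ (1 / β) / R)) := by
    rintro z ⟨hz, hzR⟩
    rw [mul_div_cancel₀ _ hR.ne', mem_Ioi]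
    have := Real.rpow_lt_rpow hv0.le hz (by positivity : 0 < 1 / β)
    rwa [← Real.rpow_mul (hR.trans hzR).le, mul_one_div_cancel hβ.ne', Real.rpow_one] at this
  have hpow : C * (v ^ (1 / β) / R) ^ (-δ) = C * R ^ δ * v ^ (-(δ / β)) := by
    rw [Real.div_rpow (by positivity) hR.le, ← Real.rpow_mul hv0.le, Real.rpow_neg hR.le,
      div_inv_eq_mul, show 1 / β * -δ = -(δ / β) by ring]
    ring
  rw [Measure.restrict_apply' measurableSet_Ioi]
  refine (measure_mono hsub).trans ((hreg _ ((one_lt_div hR).2 hvR)).trans (le_of_eq ?_))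
  rw [hpow, ENNReal.ofReal_mul' (by positivity : 0 ≤ v ^ (-(δ / β)))]
  ring

theorem setLIntegral_Ioi_rpow_le_of_measure_Ioi_mul_le {lam : Measure ℝ} {β δ C R : ℝ}
    (hβ : 0 < β) (hβδ : β < δ) (hC : 0 ≤ C) (hR : 0 < R)
    (hreg : ∀ y, 1 < y → lam (Ioi (R * y)) ≤ ENNReal.ofReal (C * y ^ (-δ)) * lam (Ioi R)) :
    ∫⁻ z in Ioi R, ENNReal.ofReal (z ^ β) ∂lam
      ≤ ENNReal.ofReal ((1 + C / (δ / β - 1)) * R ^ β) * lam (Ioi R) := by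
  set A := R ^ β with hAdef
  have hA : 0 < A := by positivity
  have hδβ : 0 < δ / β - 1 := by linarith [(one_lt_div hβ).2 hβδ]
  have hlayer : ∫⁻ z in Ioi R, ENNReal.ofReal (z ^ β) ∂lam
      = ∫⁻ v in Ioi 0, lam.restrict (Ioi R) {z | v < z ^ β} :=
    lintegral_eq_lintegral_meas_lt _ ((ae_restrict_iff' measurableSet_Ioi).2
      (ae_of_all _ fun z hz => Real.rpow_nonneg (hR.trans hz).le _)) (by fun_prop)
  have hlow : ∀ v, lam.restrict (Ioi R) {z | v < z ^ β} ≤ lam (Ioi R) := fun v =>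
    (measure_mono (subset_univ _)).trans (Measure.restrict_apply_univ _).le
  have hint : ∫⁻ v in Ioi A, ENNReal.ofReal (v ^ (-(δ / β)))
      = ENNReal.ofReal (R ^ (β - δ) / (δ / β - 1)) := by
    rw [lintegral_Ioi_rpow_of_lt (by linarith) hA, ← Real.rpow_mul hR.le]
    congr 1
    rw [show β * (-(δ / β) + 1) = β - δ by field_simp; ring,
      show -(δ / β) + 1 = -(δ / β - 1) by ring, div_neg, neg_div, neg_neg]
  calc ∫⁻ z in Ioi R, ENNReal.ofReal (z ^ β) ∂lam
      = (∫⁻ v in Ioc 0 A, lam.restrict (Ioi R) {z | v < z ^ β})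
        + ∫⁻ v in Ioi A, lam.restrict (Ioi R) {z | v < z ^ β} := by
        rw [hlayer, ← Ioc_union_Ioi_eq_Ioi hA.le, lintegral_union measurableSet_Ioi
          (Ioc_disjoint_Ioi le_rfl)]
    _ ≤ (∫⁻ _ in Ioc 0 A, lam (Ioi R)) + ∫⁻ v in Ioi A,
          ENNReal.ofReal (C * R ^ δ) * lam (Ioi R) * ENNReal.ofReal (v ^ (-(δ / β))) :=
        add_le_add (lintegral_mono fun v => hlow v) (setLIntegral_mono' measurableSet_Ioi
          fun v hv => measure_restrict_Ioi_rpow_lt_le hβ hR hreg hv)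
    _ = ENNReal.ofReal (A + C * R ^ δ * (R ^ (β - δ) / (δ / β - 1))) * lam (Ioi R) := by
        rw [setLIntegral_const, lintegral_const_mul _ (by fun_prop), hint, Real.volume_Ioc,
          sub_zero, ENNReal.ofReal_add hA.le (by positivity), add_mul,
          ENNReal.ofReal_mul (by positivity : 0 ≤ C * R ^ δ)]
        ring
    _ = _ := by
        congr 2
        rw [Real.rpow_sub hR, hAdef]
        field_simp

theorem exists_eventually_le_mul_of_le_mul {ι : Type*} {l : Filter ι} {a b f : ι → ℝ≥0∞}
    {u v : ℝ≥0∞} (hu0 : u ≠ 0) (hu : u ≠ ⊤) (hv : v ≠ ⊤)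
    (hb : ∀ᶠ i in l, b i ≤ v * f i) (ha : ∀ᶠ i in l, u * f i ≤ a i) :
    ∃ K, K ≠ ⊤ ∧ ∀ᶠ i in l, b i ≤ K * a i := by
  refine ⟨v * u⁻¹, ENNReal.mul_ne_top hv (ENNReal.inv_ne_top.2 hu0), ?_⟩
  filter_upwards [hb, ha] with i hbi hai
  calc b i ≤ v * f i := hbi
    _ = v * u⁻¹ * (u * f i) := by
        rw [mul_assoc, ← mul_assoc u⁻¹, ENNReal.inv_mul_cancel hu0 hu, one_mul]
    _ ≤ v * u⁻¹ * a i := by gcongr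

theorem exists_toReal_le_of_le_of_le_mul {ι : Type*} {l : Filter ι} {a b : ι → ℝ≥0∞}
    {K : ℝ≥0∞} (hK : K ≠ ⊤) (hab : ∀ᶠ i in l, a i ≤ b i) (hba : ∀ᶠ i in l, b i ≤ K * a i) :
    ∃ C : ℝ, 1 ≤ C ∧ ∀ᶠ i in l,
      C⁻¹ * (b i).toReal ≤ (a i).toReal ∧ (a i).toReal ≤ C * (b i).toReal := by
  refine ⟨max 1 K.toReal, le_max_left _ _, ?_⟩
  filter_upwards [hab, hba] with i hab hba
  have hC : 0 < max 1 K.toReal := one_pos.trans_le (le_max_left _ _)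
  by_cases ha : a i = ⊤
  · simp [ha, top_le_iff.1 (ha ▸ hab)]
  · have hKa : K * a i ≠ ⊤ := ENNReal.mul_ne_top hK ha
    constructor
    · rw [inv_mul_le_iff₀ hC]
      calc (b i).toReal ≤ (K * a i).toReal := ENNReal.toReal_mono hKa hba
        _ = K.toReal * (a i).toReal := ENNReal.toReal_mul
        _ ≤ _ := by gcongr; exact le_max_right _ _
    · calc (a i).toReal ≤ (b i).toReal := ENNReal.toReal_mono (ne_top_of_le_ne_top hKa hba) hab
        _ ≤ _ := le_mul_of_one_le_left ENNReal.toReal_nonneg (le_max_left _ _)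

theorem MeasureTheory.Measure.prod_setOf_norm_le {E β : Type*} [NormedAddCommGroup E]
    [MeasurableSpace E] [BorelSpace E] [MeasurableSpace β] (μ : Measure E) [SFinite μ]
    (ν : Measure β) [SFinite ν]
    {Z : Set β} (hZ : MeasurableSet Z) {ρ : β → ℝ} (hρ : Measurable ρ) :
    (μ.prod ν) {p | p.2 ∈ Z ∧ ‖p.1‖ ≤ ρ p.2} = ∫⁻ z in Z, μ (Metric.closedBall 0 (ρ z)) ∂ν := by
  have hmeas : MeasurableSet {p : E × β | p.2 ∈ Z ∧ ‖p.1‖ ≤ ρ p.2} :=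
    (measurable_snd hZ).inter (measurableSet_le measurable_fst.norm (hρ.comp measurable_snd))
  rw [Measure.prod_apply_symm hmeas, ← lintegral_indicator hZ]
  congr 1
  ext z
  by_cases hz : z ∈ Z <;> simp [hz, Metric.closedBall]

noncomputable abbrev jumpMeasure (d : ℕ) (t : ℝ) (lam : Measure ℝ) :
    Measure (ℝ × EuclideanSpace ℝ (Fin d) × ℝ) :=
  (volume.restrict (Ioc (0:ℝ) t)).prod (volume.prod (lam.restrict (Ioi (0:ℝ))))

theorem ae_jumpMeasure (d : ℕ) (t : ℝ) (lam : Measure ℝ) [SFinite lam] :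
    ∀ᵐ q ∂jumpMeasure d t lam, q.1 ∈ Ioc 0 t ∧ 0 < q.2.2 := by
  rw [jumpMeasure, ← Measure.restrict_univ (μ := (volume : Measure (EuclideanSpace ℝ (Fin d)))),
    Measure.prod_restrict, Measure.prod_restrict]
  exact (ae_restrict_mem (measurableSet_Ioc.prod (MeasurableSet.univ.prod measurableSet_Ioi))).mono
    fun q hq => ⟨hq.1, hq.2.2⟩

section Kernel

variable {d : ℕ} {α : ℝ} {g : ℝ → ℝ}

theorem pker_le_mul_rpow (hα : 0 < α) {C : ℝ}
    (hg : ∀ x, 0 < x → g x ≤ C * x ^ (-((d:ℝ) + α))) {s : ℝ} (hs : 0 < s)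
    {y : EuclideanSpace ℝ (Fin d)} (hy : y ≠ 0) :
    pker d α g s y ≤ C * s * ‖y‖ ^ (-((d:ℝ) + α)) := by
  have hy0 : 0 < ‖y‖ := norm_pos_iff.2 hy
  have hs' : 0 < s ^ ((1:ℝ) / α) := by positivity
  calc pker d α g s y
      ≤ s ^ (-((d:ℝ) / α)) * (C * (‖y‖ / s ^ ((1:ℝ) / α)) ^ (-((d:ℝ) + α))) :=
        mul_le_mul_of_nonneg_left (hg _ (div_pos hy0 hs')) (by positivity)
    _ = C * (s ^ (-((d:ℝ) / α)) / (s ^ ((1:ℝ) / α)) ^ (-((d:ℝ) + α))) * ‖y‖ ^ (-((d:ℝ) + α)) := by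
        rw [Real.div_rpow hy0.le hs'.le]
        ring
    _ = C * s * ‖y‖ ^ (-((d:ℝ) + α)) := by
        rw [← Real.rpow_mul hs.le, ← Real.rpow_sub hs,
          show -((d:ℝ) / α) - 1 / α * -((d:ℝ) + α) = 1 by field_simp; ring, Real.rpow_one]

theorem rpow_mul_le_pker (hα : 0 < α) (hg : AntitoneOn g (Ici 0)) (hg1 : 0 ≤ g 1) {s s₀ : ℝ}
    (hs : 0 < s) (hss₀ : s ≤ s₀) {y : EuclideanSpace ℝ (Fin d)} (hy : ‖y‖ ≤ s ^ ((1:ℝ) / α)) :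
    s₀ ^ (-((d:ℝ) / α)) * g 1 ≤ pker d α g s y := by
  have hs' : 0 < s ^ ((1:ℝ) / α) := by positivity
  have harg : ‖y‖ / s ^ ((1:ℝ) / α) ≤ 1 := (div_le_one hs').2 hy
  refine mul_le_mul (Real.rpow_le_rpow_of_nonpos hs hss₀ (neg_nonpos.2 (by positivity)))
    (hg (div_nonneg (norm_nonneg _) hs'.le) (mem_Ici.2 zero_le_one) harg) hg1 (by positivity)

end Kernel

noncomputable def etaFarBar (d : ℕ) (α t : ℝ) (g : ℝ → ℝ) (lam : Measure ℝ) (r : ℝ) : ℝ≥0∞ :=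
  jumpMeasure d t lam {q | 1 / 2 < ‖q.2.1‖ ∧ r < pker d α g q.1 q.2.1 * q.2.2}

section Far

variable {d : ℕ} {α t : ℝ} {g : ℝ → ℝ} {lam : Measure ℝ} [SFinite lam]

theorem div_lt_and_norm_le_of_lt_pker_mul (hα : 0 < α) {C : ℝ} (hC : 0 < C)
    (hg : ∀ x, 0 < x → g x ≤ C * x ^ (-((d:ℝ) + α))) {r s z : ℝ} (hr : 0 < r) (hs : 0 < s)
    (hst : s ≤ t) (hz : 0 < z) {y : EuclideanSpace ℝ (Fin d)} (hy : 1 / 2 < ‖y‖)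
    (hrp : r < pker d α g s y * z) :
    r / (2 ^ ((d:ℝ) + α) * C * t) < z ∧ ‖y‖ ≤ (C * t * z / r) ^ (1 / ((d:ℝ) + α)) := by
  set p := (d:ℝ) + α
  have hp : 0 < p := by positivity
  have hy0 : 0 < ‖y‖ := (by norm_num : (0:ℝ) < 1 / 2).trans hy
  have hyp : 0 < ‖y‖ ^ p := by positivity
  have hbound : r * ‖y‖ ^ p < C * t * z := by
    have h := (pker_le_mul_rpow hα hg hs (norm_pos_iff.1 hy0)).trans
      (mul_le_mul_of_nonneg_right (mul_le_mul_of_nonneg_left hst hC.le) (by positivity))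
    have := hrp.trans_le (mul_le_mul_of_nonneg_right h hz.le)
    rw [Real.rpow_neg hy0.le] at this
    calc r * ‖y‖ ^ p < C * t * (‖y‖ ^ p)⁻¹ * z * ‖y‖ ^ p := mul_lt_mul_of_pos_right this hyp
      _ = C * t * z := by field_simp
  constructor
  · have hhalf : (1 / 2 : ℝ) ^ p < ‖y‖ ^ p := Real.rpow_lt_rpow (by norm_num) hy hp
    rw [Real.div_rpow zero_le_one zero_le_two, Real.one_rpow] at hhalf
    rw [div_lt_iff₀ (by have := hs.trans_le hst; positivity)]
    calc r = 2 ^ p * (r * (1 / 2 ^ p)) := by field_simp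
      _ < 2 ^ p * (r * ‖y‖ ^ p) := by gcongr
      _ < 2 ^ p * (C * t * z) := by gcongr
      _ = z * (2 ^ p * C * t) := by ring
  · have hlt : ‖y‖ ^ p < C * t * z / r := by rw [lt_div_iff₀ hr]; linarith
    calc ‖y‖ = (‖y‖ ^ p) ^ (1 / p) := by
          rw [← Real.rpow_mul hy0.le, mul_one_div_cancel hp.ne', Real.rpow_one]
      _ ≤ (C * t * z / r) ^ (1 / p) := by gcongr

theorem etaFarBar_le_mul_setLIntegral (hα : 0 < α) (ht : 0 < t) {C : ℝ} (hC : 0 < C)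
    (hg : ∀ x, 0 < x → g x ≤ C * x ^ (-((d:ℝ) + α))) {r : ℝ} (hr : 0 < r) :
    etaFarBar d α t g lam r
      ≤ ENNReal.ofReal (t * (C * t / r) ^ ((d:ℝ) / ((d:ℝ) + α)))
        * volume (Metric.ball (0 : EuclideanSpace ℝ (Fin d)) 1)
        * ∫⁻ z in Ioi (r / (2 ^ ((d:ℝ) + α) * C * t)),
            ENNReal.ofReal (z ^ ((d:ℝ) / ((d:ℝ) + α))) ∂lam := by
  set p := (d:ℝ) + α
  set m := 2 ^ p * C * t
  have hm : 0 < m := by positivity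
  set S : Set (EuclideanSpace ℝ (Fin d) × ℝ) :=
    {q | q.2 ∈ Ioi (r / m) ∧ ‖q.1‖ ≤ (C * t * q.2 / r) ^ (1 / p)} with hS
  have hsub : ∀ᵐ q ∂jumpMeasure d t lam,
      q ∈ {q | 1 / 2 < ‖q.2.1‖ ∧ r < pker d α g q.1 q.2.1 * q.2.2} → q ∈ univ ×ˢ S := by
    filter_upwards [ae_jumpMeasure d t lam] with q ⟨hs, hz⟩ ⟨hy, hrp⟩
    exact ⟨mem_univ _, div_lt_and_norm_le_of_lt_pker_mul hα hC hg hr hs.1 hs.2 hz hy hrp⟩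
  have hball : ∀ z ∈ Ioi (r / m),
      volume (Metric.closedBall (0 : EuclideanSpace ℝ (Fin d)) ((C * t * z / r) ^ (1 / p)))
        = ENNReal.ofReal ((C * t / r) ^ ((d:ℝ) / p))
          * volume (Metric.ball (0 : EuclideanSpace ℝ (Fin d)) 1)
          * ENNReal.ofReal (z ^ ((d:ℝ) / p)) := by
    intro z hz
    have hz0 : 0 < z := (div_pos hr hm).trans hz
    rw [Measure.addHaar_closedBall _ _ (by positivity), finrank_euclideanSpace_fin,
      ← Real.rpow_natCast, ← Real.rpow_mul (by positivity), mul_div_right_comm,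
      Real.mul_rpow (by positivity) hz0.le, one_div_mul_eq_div, ENNReal.ofReal_mul (by positivity)]
    ring
  calc etaFarBar d α t g lam r ≤ jumpMeasure d t lam (univ ×ˢ S) := measure_mono_ae hsub
    _ = ENNReal.ofReal t * ∫⁻ z in Ioi (r / m),
          volume (Metric.closedBall (0 : EuclideanSpace ℝ (Fin d)) ((C * t * z / r) ^ (1 / p)))
          ∂lam := by
        rw [Measure.prod_prod, Measure.restrict_apply_univ, Real.volume_Ioc, sub_zero, hS,
          Measure.prod_setOf_norm_le (ρ := fun z => (C * t * z / r) ^ (1 / p)) _ _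
            measurableSet_Ioi (by fun_prop),
          Measure.restrict_restrict measurableSet_Ioi, Ioi_inter_Ioi,
          sup_eq_left.2 (div_pos hr hm).le]
    _ = _ := by
        rw [setLIntegral_congr_fun measurableSet_Ioi hball, lintegral_const_mul _ (by fun_prop),
          ENNReal.ofReal_mul ht.le]
        ring

end Far

section Near

variable {d : ℕ} {α t : ℝ} {g : ℝ → ℝ} {lam : Measure ℝ}

theorem etaZeroBar_le_etaBar (r : ℝ) : etaZeroBar d α t g lam r ≤ etaBar d α t g lam r :=
  measure_mono fun _ hq => (le_max_left _ _).trans_lt hq.2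

theorem etaBar_le_etaZeroBar_add_etaFarBar {r : ℝ} (hr : 1 ≤ r) :
    etaBar d α t g lam r ≤ etaZeroBar d α t g lam r + etaFarBar d α t g lam r := by
  have hmax : max r (if (d:ℝ) < α then 1 else 0) = r := max_eq_left (by split_ifs <;> linarith)
  refine (measure_mono fun q hq => ?_).trans (measure_union_le _ _)
  rcases le_or_gt ‖q.2.1‖ (1 / 2) with hq' | hq'
  · exact Or.inl ⟨hq', hmax.symm ▸ hq⟩
  · exact Or.inr ⟨hq', hq⟩

variable [SFinite lam]

theorem block_le_etaZeroBar (hα : 0 < α) (hg : AntitoneOn g (Ici 0)) {s₀ z₀ r : ℝ}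
    (hs₀ : 0 < s₀) (hs₀t : s₀ ≤ t) (hs₀α : s₀ ≤ 2 * (1 / 2) ^ α) (hz₀ : 0 < z₀) (hr : 1 ≤ r)
    (hrz : r ≤ s₀ ^ (-((d:ℝ) / α)) * g 1 * z₀) :
    ENNReal.ofReal ((s₀ / 2) ^ (1 + (d:ℝ) / α))
        * volume (Metric.ball (0 : EuclideanSpace ℝ (Fin d)) 1) * lam (Ioi z₀)
      ≤ etaZeroBar d α t g lam r := by
  set ε := (s₀ / 2) ^ (1 / α)
  have hc : 0 < s₀ ^ (-((d:ℝ) / α)) * g 1 := pos_of_mul_pos_left (by linarith) hz₀.le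
  have hg1 : 0 ≤ g 1 := (pos_of_mul_pos_right hc (by positivity)).le
  have hε : ε ≤ 1 / 2 := by
    have := Real.rpow_le_rpow (by positivity) (by linarith : s₀ / 2 ≤ (1 / 2) ^ α)
      (by positivity : 0 ≤ 1 / α)
    rwa [← Real.rpow_mul (by norm_num), mul_one_div_cancel hα.ne', Real.rpow_one] at this
  have hsub : Ioc (s₀ / 2) s₀ ×ˢ (Metric.closedBall 0 ε ×ˢ Ioi z₀)
      ⊆ {q : ℝ × EuclideanSpace ℝ (Fin d) × ℝ | ‖q.2.1‖ ≤ 1 / 2 ∧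
          max r (if (d:ℝ) < α then 1 else 0) < pker d α g q.1 q.2.1 * q.2.2} := by
    rintro ⟨s, y, z⟩ ⟨⟨hs, hs'⟩, hy, hz⟩
    dsimp only at hs hs' hy hz
    rw [Metric.mem_closedBall, dist_zero_right] at hy
    have hpk := rpow_mul_le_pker hα hg hg1 (by linarith) hs'
      (hy.trans (Real.rpow_le_rpow (by positivity) hs.le (by positivity)))
    have hmax : max r (if (d:ℝ) < α then 1 else 0) = r := max_eq_left (by split_ifs <;> linarith)
    refine ⟨hy.trans hε, ?_⟩
    rw [hmax]
    calc r ≤ s₀ ^ (-((d:ℝ) / α)) * g 1 * z₀ := hrz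
      _ < s₀ ^ (-((d:ℝ) / α)) * g 1 * z := mul_lt_mul_of_pos_left hz hc
      _ ≤ pker d α g s y * z := mul_le_mul_of_nonneg_right hpk (hz₀.trans hz).le
  have hvol : ENNReal.ofReal ((s₀ / 2) ^ (1 + (d:ℝ) / α))
      = ENNReal.ofReal (s₀ - s₀ / 2) * ENNReal.ofReal (ε ^ d) := by
    rw [← ENNReal.ofReal_mul (by linarith), ← Real.rpow_natCast, ← Real.rpow_mul (by positivity),
      Real.rpow_add (by positivity), Real.rpow_one, one_div_mul_eq_div]
    ring_nf
  calc _ = jumpMeasure d t lam (Ioc (s₀ / 2) s₀ ×ˢ (Metric.closedBall 0 ε ×ˢ Ioi z₀)) := by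
        rw [Measure.prod_prod, Measure.prod_prod, Measure.restrict_apply measurableSet_Ioc,
          Measure.restrict_apply measurableSet_Ioi,
          inter_eq_left.2 (Ioc_subset_Ioc (by linarith) hs₀t),
          inter_eq_left.2 (Ioi_subset_Ioi hz₀.le), Real.volume_Ioc,
          Measure.addHaar_closedBall _ _ (by positivity), finrank_euclideanSpace_fin, hvol]
        ring
    _ ≤ etaZeroBar d α t g lam r := measure_mono hsub

end Near

section Comparison

variable {d : ℕ} {α t : ℝ} {g : ℝ → ℝ} {lam : Measure ℝ} [SFinite lam]

theorem exists_etaFarBar_le_mul_rpow_neg (hα : 0 < α) (ht : 0 < t)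
    {C : ℝ} (hC : 0 < C) (hgC : ∀ x, 0 < x → g x ≤ C * x ^ (-((d:ℝ) + α)))
    (hmom : ∫⁻ z in Ioi (1:ℝ), ENNReal.ofReal (z ^ (1 + α / (d:ℝ))) ∂lam ≠ ⊤) :
    ∃ v, v ≠ ⊤ ∧ ∀ᶠ r in atTop, etaFarBar d α t g lam r
      ≤ v * (ENNReal.ofReal (r ^ (-(1 + α / (d:ℝ))))
        * volume (Metric.ball (0 : EuclideanSpace ℝ (Fin d)) 1)) := by
  set β := (d:ℝ) / ((d:ℝ) + α)
  set γ := 1 + α / (d:ℝ)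
  have hβγ : β ≤ γ := by
    have : β ≤ 1 := (div_le_one (by positivity)).2 (by linarith)
    have : 0 ≤ α / (d:ℝ) := by positivity
    linarith
  set m := 2 ^ ((d:ℝ) + α) * C * t
  have hm : 0 < m := by positivity
  set M := ∫⁻ z in Ioi (1:ℝ), ENNReal.ofReal (z ^ γ) ∂lam
  refine ⟨ENNReal.ofReal (t * (C * t) ^ β * m ^ (γ - β)) * M,
    ENNReal.mul_ne_top ENNReal.ofReal_ne_top hmom, ?_⟩
  filter_upwards [eventually_ge_atTop m] with r hr
  have hr0 : 0 < r := hm.trans_le hr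
  have hid :
      t * (C * t / r) ^ β * (r / m) ^ (β - γ) = t * (C * t) ^ β * m ^ (γ - β) * r ^ (-γ) := by
    rw [Real.div_rpow (by positivity) hr0.le, Real.div_rpow hr0.le hm.le, Real.rpow_sub hr0,
      Real.rpow_sub hm, Real.rpow_sub hm, Real.rpow_neg hr0.le]
    field_simp
  calc etaFarBar d α t g lam r
      ≤ ENNReal.ofReal (t * (C * t / r) ^ β)
        * volume (Metric.ball (0 : EuclideanSpace ℝ (Fin d)) 1)
        * (ENNReal.ofReal ((r / m) ^ (β - γ)) * M) :=
        (etaFarBar_le_mul_setLIntegral hα ht hC hgC hr0).trans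
          (by gcongr; exact setLIntegral_Ioi_rpow_le_of_le hβγ ((one_le_div hm).2 hr))
    _ = ENNReal.ofReal (t * (C * t / r) ^ β * (r / m) ^ (β - γ)) * M
        * volume (Metric.ball (0 : EuclideanSpace ℝ (Fin d)) 1) := by
        rw [ENNReal.ofReal_mul (by positivity : 0 ≤ t * (C * t / r) ^ β)]
        ring
    _ = _ := by
        rw [hid, ENNReal.ofReal_mul (by positivity : 0 ≤ t * (C * t) ^ β * m ^ (γ - β))]
        ring

theorem exists_mul_rpow_neg_le_etaZeroBar (hd : 1 ≤ d) (hα : 0 < α) (ht : 0 < t)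
    (hlam0 : lam (Iic 0) = 0) (hlam : lam ≠ 0) (hfin : ∀ x, 0 < x → lam (Ioi x) ≠ ⊤)
    (hg : AntitoneOn g (Ici 0)) (hg1 : 0 < g 1) :
    ∃ u, u ≠ 0 ∧ u ≠ ⊤ ∧ ∀ᶠ r in atTop, u * (ENNReal.ofReal (r ^ (-(1 + α / (d:ℝ))))
        * volume (Metric.ball (0 : EuclideanSpace ℝ (Fin d)) 1)) ≤ etaZeroBar d α t g lam r := by
  have hd0 : (0:ℝ) < d := by exact_mod_cast hd
  obtain ⟨z₁, hz₁, hlz₁⟩ := exists_pos_measure_Ioi_ne_zero hlam0 hlam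
  set γ := 1 + α / (d:ℝ)
  set a := g 1 * z₁
  have ha : 0 < a := by positivity
  -- times of order `r ^ (-α/d)` and jumps above `z₁` already push `p_s(y) z` beyond `r`
  set s₀ : ℝ → ℝ := fun r => (a / r) ^ (α / d)
  have hs₀lim : Tendsto s₀ atTop (𝓝 0) := by
    have := ((Real.continuousAt_rpow_const 0 (α / d) (Or.inr (by positivity))).tendsto).comp
      ((tendsto_const_nhds (x := a)).div_atTop tendsto_id)
    rwa [Real.zero_rpow (by positivity)] at this
  refine ⟨ENNReal.ofReal (a ^ γ / 2 ^ (1 + (d:ℝ) / α)) * lam (Ioi z₁),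
    mul_ne_zero (ENNReal.ofReal_pos.2 (by positivity)).ne' hlz₁,
    ENNReal.mul_ne_top ENNReal.ofReal_ne_top (hfin z₁ hz₁), ?_⟩
  filter_upwards [eventually_ge_atTop 1,
    hs₀lim.eventually (gt_mem_nhds (lt_min ht (by positivity) : 0 < min t (2 * (1 / 2) ^ α)))]
    with r hr hs
  have hr0 : 0 < r := one_pos.trans_le hr
  have hs0 : 0 < s₀ r := by positivity
  have hkey : s₀ r ^ (-((d:ℝ) / α)) * g 1 * z₁ = r := by
    rw [← Real.rpow_mul (by positivity), show α / d * -((d:ℝ) / α) = -1 by field_simp,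
      Real.rpow_neg_one, inv_div, mul_assoc]
    exact div_mul_cancel₀ r ha.ne'
  have hpow : (s₀ r / 2) ^ (1 + (d:ℝ) / α) = a ^ γ / 2 ^ (1 + (d:ℝ) / α) * r ^ (-γ) := by
    rw [Real.div_rpow hs0.le zero_le_two, ← Real.rpow_mul (by positivity),
      show α / d * (1 + (d:ℝ) / α) = γ by simp only [γ]; field_simp; ring,
      Real.div_rpow ha.le hr0.le, Real.rpow_neg hr0.le]
    ring
  refine le_of_eq_of_le ?_ (block_le_etaZeroBar hα hg hs0 (hs.le.trans (min_le_left _ _))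
    (hs.le.trans (min_le_right _ _)) hz₁ hr hkey.ge)
  rw [hpow, ENNReal.ofReal_mul (by positivity)]
  ring

theorem exists_etaFarBar_le_mul_measure_Ioi (hd : 1 ≤ d) (hα : 0 < α) (ht : 0 < t)
    (hfin : ∀ x, 0 < x → lam (Ioi x) ≠ ⊤)
    {C : ℝ} (hC : 0 < C) (hgC : ∀ x, 0 < x → g x ≤ C * x ^ (-((d:ℝ) + α)))
    {δ c M : ℝ} (hδ : (d:ℝ) / ((d:ℝ) + α) < δ)
    (hreg : ∀ r y : ℝ, M < r → M < y →
      (lam (Ioi (r * y))).toReal ≤ c * y ^ (-δ) * (lam (Ioi r)).toReal) :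
    ∃ v, v ≠ ⊤ ∧ ∀ᶠ r in atTop, etaFarBar d α t g lam r
      ≤ v * (volume (Metric.ball (0 : EuclideanSpace ℝ (Fin d)) 1)
        * lam (Ioi (r / (2 ^ ((d:ℝ) + α) * C * t)))) := by
  set β := (d:ℝ) / ((d:ℝ) + α)
  have hβ : 0 < β := by have : (0:ℝ) < d := by exact_mod_cast hd
                        positivity
  set m := 2 ^ ((d:ℝ) + α) * C * t
  have hm : 0 < m := by positivity
  set c' := max c (max M 1 ^ δ)
  have hc' : 0 ≤ c' := le_max_of_le_right (by positivity)
  set B := 1 + c' / (δ / β - 1)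
  have hB : 0 ≤ B := by have := (one_lt_div hβ).2 hδ; positivity
  refine ⟨ENNReal.ofReal (t * (C * t / m) ^ β * B), ENNReal.ofReal_ne_top, ?_⟩
  filter_upwards [eventually_gt_atTop (m * max M 1)] with r hr
  have hR : max M 1 < r / m := by rwa [lt_div_iff₀' hm]
  have hr0 : 0 < r := (mul_pos hm (by positivity)).trans hr
  have hJ := setLIntegral_Ioi_rpow_le_of_measure_Ioi_mul_le hβ hδ hc'
    (one_pos.trans (lt_of_le_of_lt (le_max_right _ _) hR))
    fun y hy => measure_Ioi_mul_le_of_toReal_le hfin (hβ.trans hδ).le hreg hR hy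
  calc etaFarBar d α t g lam r
      ≤ ENNReal.ofReal (t * (C * t / r) ^ β)
        * volume (Metric.ball (0 : EuclideanSpace ℝ (Fin d)) 1)
        * (ENNReal.ofReal (B * (r / m) ^ β) * lam (Ioi (r / m))) :=
        (etaFarBar_le_mul_setLIntegral hα ht hC hgC hr0).trans (by gcongr)
    _ = ENNReal.ofReal (t * (C * t / r) ^ β * (B * (r / m) ^ β))
        * (volume (Metric.ball (0 : EuclideanSpace ℝ (Fin d)) 1) * lam (Ioi (r / m))) := by
        rw [ENNReal.ofReal_mul (by positivity : 0 ≤ t * (C * t / r) ^ β)]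
        ring
    _ = _ := by
        rw [← div_mul_div_cancel₀ hr0.ne' (a := C * t) (c := m),
          Real.mul_rpow (by positivity) (by positivity)]
        ring_nf

theorem exists_mul_measure_Ioi_le_etaZeroBar (hd : 1 ≤ d) (hα : 0 < α) (ht : 0 < t)
    (hg : AntitoneOn g (Ici 0)) (hg1 : 0 < g 1) {m : ℝ} (hm : 0 < m) :
    ∃ u, u ≠ 0 ∧ u ≠ ⊤ ∧ ∀ᶠ r in atTop, u * (volume (Metric.ball (0 : EuclideanSpace ℝ (Fin d)) 1)
        * lam (Ioi (r / m))) ≤ etaZeroBar d α t g lam r := by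
  have hd0 : (0:ℝ) < d := by exact_mod_cast hd
  -- `s₀` is small enough that `p_s(y) ≥ m` for `s ∈ (s₀/2, s₀]` and `|y| ≤ (s₀/2)^(1/α)`
  set s₀ := min (min t (2 * (1 / 2) ^ α)) ((g 1 / m) ^ (α / d))
  have hs₀ : 0 < s₀ := lt_min (lt_min ht (by positivity)) (by positivity)
  have hs₀m : m ≤ s₀ ^ (-((d:ℝ) / α)) * g 1 := by
    have := Real.rpow_le_rpow hs₀.le (min_le_right _ _) (by positivity : 0 ≤ (d:ℝ) / α)
    rw [← Real.rpow_mul (by positivity), div_mul_div_cancel₀ hd0.ne', div_self hα.ne',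
      Real.rpow_one, le_div_iff₀ hm] at this
    rw [Real.rpow_neg hs₀.le, inv_mul_eq_div, le_div_iff₀ (by positivity)]
    linarith
  refine ⟨ENNReal.ofReal ((s₀ / 2) ^ (1 + (d:ℝ) / α)), (ENNReal.ofReal_pos.2 (by positivity)).ne',
    ENNReal.ofReal_ne_top, ?_⟩
  filter_upwards [eventually_ge_atTop 1] with r hr
  refine le_of_eq_of_le (by ring) (block_le_etaZeroBar hα hg hs₀
    ((min_le_left _ _).trans (min_le_left _ _)) ((min_le_left _ _).trans (min_le_right _ _))
    (by positivity) hr ?_)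
  calc r = m * (r / m) := by field_simp
    _ ≤ s₀ ^ (-((d:ℝ) / α)) * g 1 * (r / m) := by gcongr

end Comparison

theorem stmt14_general (d : ℕ) (hd : 1 ≤ d) (α : ℝ) (hα : α ∈ Set.Ioo (0:ℝ) 2) (t : ℝ) (ht : 0 < t)
    (lam : MeasureTheory.Measure ℝ) [SigmaFinite lam]
    (hlam0 : lam (Set.Iic 0) = 0) (hlam_ne : lam ≠ 0)
    (hmom : ∫⁻ z in Set.Ioi (0:ℝ), ENNReal.ofReal (min 1 (z ^ 2)) ∂lam ≠ ⊤)
    (g : ℝ → ℝ)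
    (hg_anti : StrictAntiOn g (Set.Ici 0)) (hg_pos : ∀ x : ℝ, 0 ≤ x → 0 < g x)
    (c₀ : ℝ)
    (hg_tail : Filter.Tendsto (fun r : ℝ => r ^ ((d:ℝ) + α) * g r) Filter.atTop (nhds c₀))
    (hcase :
      (∫⁻ z in Set.Ioi (1:ℝ), ENNReal.ofReal (z ^ (1 + α / (d:ℝ))) ∂lam ≠ ⊤) ∨
      (∃ δ c M : ℝ, (d:ℝ) / ((d:ℝ) + α) < δ ∧ 0 < c ∧ 0 < M ∧
        ∀ r y : ℝ, M < r → M < y →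
          (lam (Set.Ioi (r * y))).toReal ≤ c * y ^ (-δ) * (lam (Set.Ioi r)).toReal)) :
    ∃ C : ℝ, 1 ≤ C ∧ ∀ᶠ r : ℝ in Filter.atTop,
      C⁻¹ * (etaBar d α t g lam r).toReal ≤ (etaZeroBar d α t g lam r).toReal ∧
      (etaZeroBar d α t g lam r).toReal ≤ C * (etaBar d α t g lam r).toReal := by
  obtain ⟨hα0, -⟩ := hα
  obtain ⟨C, hC, hgC⟩ :=
    exists_le_mul_rpow_neg_of_tendsto (by positivity) hg_anti.antitoneOn hg_tail
  have hfin : ∀ x, 0 < x → lam (Ioi x) ≠ ⊤ := fun _ hx =>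
    measure_Ioi_ne_top_of_lintegral_min_sq hmom hx
  have hg1 : 0 < g 1 := hg_pos 1 zero_le_one
  obtain ⟨K, hK, hfar⟩ : ∃ K, K ≠ ⊤ ∧
      ∀ᶠ r in atTop, etaFarBar d α t g lam r ≤ K * etaZeroBar d α t g lam r := by
    rcases hcase with hmom' | ⟨δ, c, M, hδ, -, -, hreg⟩
    · obtain ⟨v, hv, hupper⟩ := exists_etaFarBar_le_mul_rpow_neg hα0 ht hC hgC hmom'
      obtain ⟨u, hu0, hu, hlower⟩ := exists_mul_rpow_neg_le_etaZeroBar hd hα0 ht hlam0 hlam_ne hfin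
        hg_anti.antitoneOn hg1
      exact exists_eventually_le_mul_of_le_mul hu0 hu hv hupper hlower
    · obtain ⟨v, hv, hupper⟩ := exists_etaFarBar_le_mul_measure_Ioi hd hα0 ht hfin hC hgC hδ hreg
      obtain ⟨u, hu0, hu, hlower⟩ := exists_mul_measure_Ioi_le_etaZeroBar (lam := lam) hd hα0 ht
        hg_anti.antitoneOn hg1 (by positivity : 0 < 2 ^ ((d:ℝ) + α) * C * t)
      exact exists_eventually_le_mul_of_le_mul hu0 hu hv hupper hlower
  refine exists_toReal_le_of_le_of_le_mul (ENNReal.add_ne_top.2 ⟨ENNReal.one_ne_top, hK⟩)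
    (Eventually.of_forall etaZeroBar_le_etaBar) ?_
  filter_upwards [hfar, eventually_ge_atTop 1] with r hfar hr
  calc etaBar d α t g lam r ≤ etaZeroBar d α t g lam r + etaFarBar d α t g lam r :=
        etaBar_le_etaZeroBar_add_etaFarBar hr
    _ ≤ etaZeroBar d α t g lam r + K * etaZeroBar d α t g lam r := by gcongr
    _ = (1 + K) * etaZeroBar d α t g lam r := by ring

theorem stmt14 (d : ℕ) (hd : 1 ≤ d) (α : ℝ) (hα : α ∈ Set.Ioo (0:ℝ) 2) (t : ℝ) (ht : 0 < t)
    (lam : MeasureTheory.Measure ℝ) [SigmaFinite lam]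
    (hlam0 : lam (Set.Iic 0) = 0) (hlam_ne : lam ≠ 0)
    (hmom : ∫⁻ z in Set.Ioi (0:ℝ), ENNReal.ofReal (min 1 (z ^ 2)) ∂lam ≠ ⊤)
    (g : ℝ → ℝ) (hg_cont : ContinuousOn g (Set.Ici 0))
    (hg_anti : StrictAntiOn g (Set.Ici 0)) (hg_pos : ∀ x : ℝ, 0 ≤ x → 0 < g x)
    (c₀ : ℝ) (hc₀ : 0 < c₀)
    (hg_tail : Filter.Tendsto (fun r : ℝ => r ^ ((d:ℝ) + α) * g r) Filter.atTop (nhds c₀))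
    (hsmall : ∫⁻ z in Set.Ioc (0:ℝ) 1, ENNReal.ofReal (z ^ (1 + α / (d:ℝ))) ∂lam ≠ ⊤)
    (hbig : ∫⁻ z in Set.Ioi (1:ℝ), ENNReal.ofReal (z ^ ((d:ℝ) / ((d:ℝ) + α))) ∂lam ≠ ⊤)
    (hcase :
      (∫⁻ z in Set.Ioi (1:ℝ), ENNReal.ofReal (z ^ (1 + α / (d:ℝ))) ∂lam ≠ ⊤) ∨
      (∃ δ c M : ℝ, (d:ℝ) / ((d:ℝ) + α) < δ ∧ 0 < c ∧ 0 < M ∧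
        ∀ r y : ℝ, M < r → M < y →
          (lam (Set.Ioi (r * y))).toReal ≤ c * y ^ (-δ) * (lam (Set.Ioi r)).toReal)) :
    ∃ C : ℝ, 1 ≤ C ∧ ∀ᶠ r : ℝ in Filter.atTop,
      C⁻¹ * (etaBar d α t g lam r).toReal ≤ (etaZeroBar d α t g lam r).toReal ∧
      (etaZeroBar d α t g lam r).toReal ≤ C * (etaBar d α t g lam r).toReal :=
  stmt14_general d hd α hα t ht lam hlam0 hlam_ne hmom g hg_anti hg_pos c₀ hg_tail hcase
end

section
/- For every γ ∈ [1, 1 + α/d) there exists a constant c₁ > 0 (depending only on d, α, γ and g) such that for every unit vector e ∈ ℝ^d, ∫_{0}^{1} ∫_{ℝ^d} |p_s(z + e) − p_s(z)|^{γ} dz ds ≤ c₁. -/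
open MeasureTheory Set Filter Topology
open scoped ENNReal NNReal

theorem stmt16 (d : ℕ) (hd : 1 ≤ d) (α : ℝ) (hα : α ∈ Set.Ioo (0:ℝ) 2)
    (g : ℝ → ℝ) (hg_cont : ContinuousOn g (Set.Ici 0))
    (hg_anti : StrictAntiOn g (Set.Ici 0)) (hg_pos : ∀ x : ℝ, 0 ≤ x → 0 < g x)
    (c₀ : ℝ) (hc₀ : 0 < c₀)
    (hg_tail : Filter.Tendsto (fun r : ℝ => r ^ ((d:ℝ) + α) * g r) Filter.atTop (nhds c₀))
    (hnorm : ∀ s : ℝ, 0 < s →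
      ∫⁻ y : EuclideanSpace ℝ (Fin d), ENNReal.ofReal (pker d α g s y) = 1)
    (γ : ℝ) (hγ1 : 1 ≤ γ) (hγ2 : γ < 1 + α / (d:ℝ)) :
    ∃ c₁ : ℝ, 0 < c₁ ∧ ∀ e : EuclideanSpace ℝ (Fin d), ‖e‖ = 1 →
      (∫⁻ s in Set.Ioc (0:ℝ) 1, ∫⁻ z : EuclideanSpace ℝ (Fin d),
        ENNReal.ofReal (|pker d α g s (z + e) - pker d α g s z| ^ γ))
        ≤ ENNReal.ofReal c₁ := by
  obtain ⟨hα0, hα2⟩ := hα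
  have hd0 : (0:ℝ) < d := by exact_mod_cast Nat.lt_of_lt_of_le Nat.zero_lt_one hd
  set g0 : ℝ := g 0 with hg0def
  have hg0 : 0 < g0 := hg_pos 0 le_rfl
  set β : ℝ := ((d:ℝ) / α) * (γ - 1) with hβ
  have hβ0 : 0 ≤ β := mul_nonneg (div_nonneg hd0.le hα0.le) (by linarith)
  have hβ1 : β < 1 := by
    have h1 : γ - 1 < α / d := by linarith
    have h2 : ((d:ℝ)/α) * (γ - 1) < ((d:ℝ)/α) * (α / d) :=
      mul_lt_mul_of_pos_left h1 (div_pos hd0 hα0)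
    have h3 : ((d:ℝ)/α) * (α / d) = 1 := by field_simp
    rw [h3] at h2; exact h2
  -- integrability of s ^ (-β) on (0,1]
  have hI : IntegrableOn (fun s : ℝ => s ^ (-β)) (Set.Ioc 0 1) := by
    have h := intervalIntegral.intervalIntegrable_rpow' (a := 0) (b := 1)
      (by linarith : (-1:ℝ) < -β)
    rwa [intervalIntegrable_iff, Set.uIoc_of_le (by norm_num : (0:ℝ) ≤ 1)] at h
  set I : ℝ := ∫ s in Set.Ioc (0:ℝ) 1, s ^ (-β) with hIdef
  have hInn : 0 ≤ I :=
    setIntegral_nonneg measurableSet_Ioc (fun s hs => Real.rpow_nonneg hs.1.le _)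
  have hIeq : ∫⁻ s in Set.Ioc (0:ℝ) 1, ENNReal.ofReal (s ^ (-β)) = ENNReal.ofReal I := by
    rw [hIdef, ofReal_integral_eq_lintegral_ofReal hI]
    exact (ae_restrict_iff' measurableSet_Ioc).2
      (ae_of_all _ (fun s hs => Real.rpow_nonneg hs.1.le _))
  refine ⟨2 * g0 ^ (γ - 1) * I + 1, by positivity, fun e he => ?_⟩
  have key : ∀ s ∈ Set.Ioc (0:ℝ) 1,
      (∫⁻ z : EuclideanSpace ℝ (Fin d),
        ENNReal.ofReal (|pker d α g s (z + e) - pker d α g s z| ^ γ))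
      ≤ ENNReal.ofReal (2 * g0 ^ (γ - 1)) * ENNReal.ofReal (s ^ (-β)) := by
    intro s hs
    have hs0 : 0 < s := hs.1
    have hcpos : 0 < s ^ (-((d:ℝ)/α)) := Real.rpow_pos_of_pos hs0 _
    have hspos : 0 < s ^ ((1:ℝ)/α) := Real.rpow_pos_of_pos hs0 _
    set M : ℝ := s ^ (-((d:ℝ)/α)) * g0 with hMdef
    have hMpos : 0 < M := mul_pos hcpos hg0
    have ht : ∀ y : EuclideanSpace ℝ (Fin d), 0 ≤ ‖y‖ / s ^ ((1:ℝ)/α) :=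
      fun y => div_nonneg (norm_nonneg y) hspos.le
    have hpnonneg : ∀ y : EuclideanSpace ℝ (Fin d), 0 ≤ pker d α g s y :=
      fun y => mul_nonneg hcpos.le (hg_pos _ (ht y)).le
    have hple : ∀ y : EuclideanSpace ℝ (Fin d), pker d α g s y ≤ M := by
      intro y
      have : g (‖y‖ / s ^ ((1:ℝ)/α)) ≤ g0 :=
        hg_anti.antitoneOn (Set.mem_Ici.2 le_rfl) (Set.mem_Ici.2 (ht y)) (ht y)
      exact mul_le_mul_of_nonneg_left this hcpos.le
    have hpt : ∀ z : EuclideanSpace ℝ (Fin d),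
        |pker d α g s (z + e) - pker d α g s z| ^ γ
        ≤ M ^ (γ - 1) * (pker d α g s (z + e) + pker d α g s z) := by
      intro z
      set a := pker d α g s (z + e)
      set b := pker d α g s z
      have ha0 := hpnonneg (z + e); have hb0 := hpnonneg z
      have haM := hple (z + e); have hbM := hple z
      have hx0 : 0 ≤ |a - b| := abs_nonneg _
      have hxM : |a - b| ≤ M := abs_sub_le_iff.mpr ⟨by linarith, by linarith⟩
      have hxab : |a - b| ≤ a + b := abs_sub_le_iff.mpr ⟨by linarith, by linarith⟩
      rcases eq_or_lt_of_le hx0 with h | h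
      · rw [← h, Real.zero_rpow (by linarith : γ ≠ 0)]
        positivity
      · have hsplit : |a - b| ^ γ = |a - b| ^ (γ - 1) * |a - b| := by
          nth_rewrite 1 [show γ = (γ - 1) + 1 by ring]
          exact Real.rpow_add_one h.ne' _
        rw [hsplit]
        exact mul_le_mul (Real.rpow_le_rpow hx0 hxM (by linarith)) hxab hx0
          (Real.rpow_nonneg hMpos.le _)
    have hcont : Continuous (fun z : EuclideanSpace ℝ (Fin d) => pker d α g s z) := by
      have h1 : Continuous (fun z : EuclideanSpace ℝ (Fin d) => ‖z‖ / s ^ ((1:ℝ)/α)) :=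
        continuous_norm.div_const _
      exact continuous_const.mul (hg_cont.comp_continuous h1 (fun z => Set.mem_Ici.2 (ht z)))
    have hmeas1 : Measurable (fun z : EuclideanSpace ℝ (Fin d) =>
        ENNReal.ofReal (pker d α g s (z + e))) :=
      ((hcont.comp (continuous_id.add continuous_const)).measurable).ennreal_ofReal
    have hMγ : 0 ≤ M ^ (γ - 1) := Real.rpow_nonneg hMpos.le _
    calc (∫⁻ z : EuclideanSpace ℝ (Fin d),
            ENNReal.ofReal (|pker d α g s (z + e) - pker d α g s z| ^ γ))
        ≤ ∫⁻ z : EuclideanSpace ℝ (Fin d),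
            ENNReal.ofReal (M ^ (γ - 1) * (pker d α g s (z + e) + pker d α g s z)) :=
          lintegral_mono fun z => ENNReal.ofReal_le_ofReal (hpt z)
      _ = ENNReal.ofReal (M ^ (γ - 1)) * ∫⁻ z : EuclideanSpace ℝ (Fin d),
            ENNReal.ofReal (pker d α g s (z + e) + pker d α g s z) := by
          simp_rw [ENNReal.ofReal_mul hMγ]
          exact lintegral_const_mul' _ _ ENNReal.ofReal_ne_top
      _ = ENNReal.ofReal (M ^ (γ - 1)) *
            ((∫⁻ z : EuclideanSpace ℝ (Fin d), ENNReal.ofReal (pker d α g s (z + e))) +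
             (∫⁻ z : EuclideanSpace ℝ (Fin d), ENNReal.ofReal (pker d α g s z))) := by
          congr 1
          simp_rw [ENNReal.ofReal_add (hpnonneg _) (hpnonneg _)]
          exact lintegral_add_left hmeas1 _
      _ = ENNReal.ofReal (M ^ (γ - 1)) * 2 := by
          rw [lintegral_add_right_eq_self
            (fun z => ENNReal.ofReal (pker d α g s z)) e, hnorm s hs0]
          norm_num
      _ = ENNReal.ofReal (2 * g0 ^ (γ - 1)) * ENNReal.ofReal (s ^ (-β)) := by
          rw [← ENNReal.ofReal_mul (by positivity : (0:ℝ) ≤ 2 * g0 ^ (γ-1))]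
          rw [show (2:ℝ≥0∞) = ENNReal.ofReal 2 by norm_num,
            ← ENNReal.ofReal_mul hMγ]
          congr 1
          rw [hMdef, Real.mul_rpow hcpos.le hg0.le, ← Real.rpow_mul hs0.le,
            show -((d:ℝ) / α) * (γ - 1) = -β by rw [hβ]; ring]
          ring
  calc (∫⁻ s in Set.Ioc (0:ℝ) 1, ∫⁻ z : EuclideanSpace ℝ (Fin d),
          ENNReal.ofReal (|pker d α g s (z + e) - pker d α g s z| ^ γ))
      ≤ ∫⁻ s in Set.Ioc (0:ℝ) 1,
          ENNReal.ofReal (2 * g0 ^ (γ - 1)) * ENNReal.ofReal (s ^ (-β)) :=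
        lintegral_mono_ae ((ae_restrict_iff' measurableSet_Ioc).2 (ae_of_all _ key))
    _ = ENNReal.ofReal (2 * g0 ^ (γ - 1)) * ∫⁻ s in Set.Ioc (0:ℝ) 1,
          ENNReal.ofReal (s ^ (-β)) :=
        lintegral_const_mul' _ _ ENNReal.ofReal_ne_top
    _ = ENNReal.ofReal (2 * g0 ^ (γ - 1) * I) := by
        rw [hIeq, ← ENNReal.ofReal_mul (by positivity)]
    _ ≤ ENNReal.ofReal (2 * g0 ^ (γ - 1) * I + 1) :=
        ENNReal.ofReal_le_ofReal (by linarith)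
end
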